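/- arXiv:2207.04611 — 4 statements merged into one kernel-verified Lean document; each statement's English description precedes it below -/
import Mathlib

section
/- Let (ξ_k)_{k≥1} be a sequence of real random variables on a measurable space (Ω,F) that is i.i.d. under the sublinear expectation 𝔼 = sup_{P∈Θ} E_P, and suppose 𝔼[|ξ_1|^{1+β}] < ∞ for some β > 0. Then for every P ∈ Θ, P-almost surely μ̲ ≤ liminf_{n→∞} ξ̄_n ≤ limsup_{n→∞} ξ̄_n ≤ μ̄, where μ̄ = 𝔼[ξ_1] and μ̲ = −𝔼[−ξ_1]. -/
open MeasureTheory Filter Topology Real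

/-- The sublinear expectation `𝔼[X] = sup_{P ∈ Θ} E_P[X]` associated with a set `Θ`
of probability measures. -/
noncomputable def SLE {Ω : Type*} [MeasurableSpace Ω] (Θ : Set (Measure Ω)) (X : Ω → ℝ) : ℝ :=
  sSup ((fun P : Measure Ω => ∫ ω, X ω ∂P) '' Θ)

/-- A bounded Lipschitz test function. -/
def BddLip {E : Type*} [PseudoMetricSpace E] (φ : E → ℝ) : Prop :=
  (∃ C, ∀ x, |φ x| ≤ C) ∧ (∃ K, LipschitzWith K φ)

/-- `X` is independent of the random vector `Y` under the sublinear expectation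
associated with `Θ`: `𝔼[φ(Y, X)] = 𝔼[ 𝔼[φ(y, X)]|_{y = Y} ]` for all bounded Lipschitz `φ`. -/
def IndepVec {Ω : Type*} [MeasurableSpace Ω] (Θ : Set (Measure Ω)) {n : ℕ}
    (X : Ω → ℝ) (Y : Ω → Fin n → ℝ) : Prop :=
  ∀ φ : (Fin n → ℝ) × ℝ → ℝ, BddLip φ →
    SLE Θ (fun ω => φ (Y ω, X ω)) = SLE Θ (fun ω => SLE Θ (fun ω' => φ (Y ω, X ω')))

/-- `(ξ_k)` is i.i.d. under the sublinear expectation associated with `Θ`: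
each `ξ_{k+1}` is identically distributed with `ξ_1` and independent of `(ξ_1, …, ξ_k)`. -/
def IsIID {Ω : Type*} [MeasurableSpace Ω] (Θ : Set (Measure Ω)) (ξ : ℕ → Ω → ℝ) : Prop :=
  (∀ k, ∀ φ : ℝ → ℝ, BddLip φ → SLE Θ (fun ω => φ (ξ k ω)) = SLE Θ (fun ω => φ (ξ 0 ω))) ∧
  (∀ k : ℕ, IndepVec Θ (ξ (k + 1)) (fun ω (i : Fin (k + 1)) => ξ i ω))

set_option linter.unusedSectionVars false

section SLEbasic
variable {Ω : Type*} [MeasurableSpace Ω] {Θ : Set (Measure Ω)}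

lemma SLE_le' {f : Ω → ℝ} {c : ℝ} (hc : Θ = ∅ → 0 ≤ c) (h : ∀ Q ∈ Θ, ∫ ω, f ω ∂Q ≤ c) :
    SLE Θ f ≤ c := by
  rcases Θ.eq_empty_or_nonempty with hΘ | hΘ
  · unfold SLE; rw [hΘ, Set.image_empty, Real.sSup_empty]; exact hc hΘ
  · exact csSup_le (hΘ.image _) (by rintro _ ⟨P, hP, rfl⟩; exact h P hP)

lemma SLE_le {f : Ω → ℝ} {c : ℝ} (hc : 0 ≤ c) (h : ∀ Q ∈ Θ, ∫ ω, f ω ∂Q ≤ c) :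
    SLE Θ f ≤ c := by
  exact SLE_le' (fun _ => hc) h

lemma SLE_bddAbove {f : Ω → ℝ} {c : ℝ} (h : ∀ Q ∈ Θ, ∫ ω, f ω ∂Q ≤ c) :
    BddAbove (Set.range fun Q => ⨆ _ : Q ∈ Θ, ∫ ω, f ω ∂Q) := by
  refine ⟨max c 0, ?_⟩
  rintro x ⟨Q, rfl⟩
  exact Real.iSup_le (fun hQ => (h Q hQ).trans (le_max_left _ _)) (le_max_right _ _)

lemma le_SLE {f : Ω → ℝ} {c : ℝ} (h : ∀ Q ∈ Θ, ∫ ω, f ω ∂Q ≤ c) {P : Measure Ω}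
    (hP : P ∈ Θ) : ∫ ω, f ω ∂P ≤ SLE Θ f := by
  haveI : Nonempty (P ∈ Θ) := ⟨hP⟩
  calc ∫ ω, f ω ∂P = ⨆ _ : P ∈ Θ, ∫ ω, f ω ∂P := ciSup_const.symm
  _ ≤ SLE Θ f := by
    rw [ciSup_const]; exact le_csSup ⟨c, by rintro _ ⟨Q, hQ, rfl⟩; exact h Q hQ⟩ ⟨P, hP, rfl⟩

lemma SLE_nonneg (hprob : ∀ P ∈ Θ, IsProbabilityMeasure P) {f : Ω → ℝ} {c : ℝ}
    (h : ∀ Q ∈ Θ, ∫ ω, f ω ∂Q ≤ c)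
    (hf : ∀ ω, 0 ≤ f ω := by intro ω; exact Real.exp_nonneg _) : 0 ≤ SLE Θ f := by
  rcases Θ.eq_empty_or_nonempty with hΘ | ⟨P, hP⟩
  · unfold SLE; rw [hΘ, Set.image_empty, Real.sSup_empty]
  · exact (integral_nonneg hf).trans (le_SLE h hP)

lemma SLE_const_mul {f : Ω → ℝ} {c : ℝ} (hc : 0 ≤ c) :
    SLE Θ (fun ω => c * f ω) = c * SLE Θ f := by
  unfold SLE
  show _ = c • sSup ((fun P : Measure Ω => ∫ ω, f ω ∂P) '' Θ)
  rw [← Real.sSup_smul_of_nonneg hc, ← Set.image_smul, Set.image_image]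
  congr 2; funext P
  exact integral_const_mul c _

end SLEbasic

/-- clamp to `[-a, a]` -/
noncomputable def cl (a x : ℝ) : ℝ := max (-a) (min x a)

lemma cl_le (a x : ℝ) (ha : 0 ≤ a) : cl a x ≤ a := max_le (by linarith) (min_le_right _ _)
lemma neg_le_cl (a x : ℝ) : -a ≤ cl a x := le_max_left _ _
lemma abs_cl_le (a x : ℝ) (ha : 0 ≤ a) : |cl a x| ≤ a := abs_le.2 ⟨neg_le_cl a x, cl_le a x ha⟩
lemma abs_cl_le_abs (a x : ℝ) (ha : 0 ≤ a) : |cl a x| ≤ |x| := by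
  rw [abs_le]
  constructor
  · refine le_trans ?_ (le_max_right _ _)
    exact le_min (neg_abs_le x) (by linarith [abs_nonneg x])
  · exact max_le (by linarith [abs_nonneg x]) ((min_le_left _ _).trans (le_abs_self x))

lemma cl_eq_self {a x : ℝ} (h : |x| ≤ a) : cl a x = x := by
  rw [abs_le] at h
  unfold cl
  rw [min_eq_left h.2, max_eq_right h.1]

lemma lipschitzWith_cl (a : ℝ) : LipschitzWith 1 (cl a) := by
  have : LipschitzWith (0 ⊔ (1 ⊔ 0)) (fun x => max (-a) (min x a)) :=
    (LipschitzWith.const (-a)).max (LipschitzWith.id.min (LipschitzWith.const a))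
  simp at this; exact this

lemma abs_cl_sub_cl (a x y : ℝ) : |cl a x - cl a y| ≤ |x - y| := by
  have := (lipschitzWith_cl a).dist_le_mul x y
  simpa [Real.dist_eq] using this

lemma measurable_cl {Ω : Type*} [MeasurableSpace Ω] {f : Ω → ℝ} (hf : Measurable f) (a : ℝ) :
    Measurable fun ω => cl a (f ω) :=
  (measurable_const.max ((hf.min measurable_const)))

-- exp u ≤ 1 + u + 2u² for |u| ≤ 1
lemma exp_le_quadratic {u : ℝ} (h : |u| ≤ 1) : Real.exp u ≤ 1 + u + 2 * u ^ 2 := by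
  have := Real.exp_bound h (n := 2) (by norm_num)
  have h2 : ∑ m ∈ Finset.range 2, u ^ m / (m.factorial : ℝ) = 1 + u := by
    simp [Finset.sum_range_succ]
  rw [h2] at this
  have h3 : |u| ^ 2 * ((2:ℕ).succ / ((2:ℕ).factorial * (2:ℕ))) ≤ 2 * u ^ 2 := by
    rw [sq_abs]
    norm_num
    nlinarith [sq_nonneg u]
  have := abs_le.1 this
  linarith [this.2]

-- |e^a - e^b| ≤ e^B |a - b| when a,b ≤ B
lemma abs_exp_sub_exp {a b B : ℝ} (ha : a ≤ B) (hb : b ≤ B) :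
    |Real.exp a - Real.exp b| ≤ Real.exp B * |a - b| := by
  wlog hab : b ≤ a generalizing a b
  · have := this hb ha (by linarith)
    rwa [abs_sub_comm, abs_sub_comm b a] at this
  rw [abs_of_nonneg (by simp [Real.exp_le_exp, hab] : (0:ℝ) ≤ Real.exp a - Real.exp b),
      abs_of_nonneg (by linarith)]
  have key : Real.exp a - Real.exp b ≤ Real.exp a * (a - b) := by
    have h1 : 1 - (a - b) ≤ Real.exp (-(a-b)) := by linarith [Real.add_one_le_exp (-(a-b))]
    have h2 := mul_le_mul_of_nonneg_left h1 (Real.exp_nonneg a)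
    rw [← Real.exp_add] at h2
    have : a + -(a - b) = b := by ring
    rw [this] at h2
    nlinarith [Real.exp_nonneg a]
  calc Real.exp a - Real.exp b ≤ Real.exp a * (a - b) := key
  _ ≤ Real.exp B * (a - b) := mul_le_mul_of_nonneg_right (Real.exp_le_exp.2 ha) (by linarith)

-- Lipschitz of exp composed with bounded-above Lipschitz function
lemma lipschitzWith_exp_comp {α : Type*} [PseudoMetricSpace α] {f : α → ℝ} {c : ℝ} (hc : 0 ≤ c)
    (hf : ∀ x y, dist (f x) (f y) ≤ c * dist x y) {B : ℝ} (hB : ∀ x, f x ≤ B) :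
    LipschitzWith (Real.toNNReal (Real.exp B * c)) (fun x => Real.exp (f x)) := by
  apply LipschitzWith.of_dist_le_mul
  intro x y
  rw [Real.coe_toNNReal _ (by positivity)]
  calc dist (Real.exp (f x)) (Real.exp (f y)) = |Real.exp (f x) - Real.exp (f y)| := Real.dist_eq _ _
  _ ≤ Real.exp B * |f x - f y| := abs_exp_sub_exp (hB x) (hB y)
  _ = Real.exp B * dist (f x) (f y) := by rw [Real.dist_eq]
  _ ≤ Real.exp B * (c * dist x y) := by
      apply mul_le_mul_of_nonneg_left (hf x y) (Real.exp_nonneg B)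
  _ = Real.exp B * c * dist x y := by ring


-- quantitative clamp lemmas
lemma cl_le_add {a x β : ℝ} (ha : 0 < a) (hβ : 0 < β) :
    cl a x ≤ x + a ^ (-β) * |x| ^ (1 + β) := by
  have hnn : 0 ≤ a ^ (-β) * |x| ^ (1 + β) :=
    mul_nonneg (rpow_nonneg ha.le _) (rpow_nonneg (abs_nonneg x) _)
  rcases le_or_gt (-a) x with h | h
  · have : cl a x ≤ x := max_le h (min_le_left _ _)
    linarith
  · have hax : a < |x| := by rw [abs_of_neg (by linarith : x < 0)]; linarith
    have hcl : cl a x = -a := by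
      unfold cl
      rw [min_eq_left (by linarith : x ≤ a), max_eq_left h.le]
    rw [hcl]
    have key : |x| ≤ a ^ (-β) * |x| ^ (1 + β) := by
      have hb : (0:ℝ) < a ^ β := rpow_pos_of_pos ha β
      have h1 : |x| * a ^ β ≤ |x| ^ (1 + β) := by
        have h2 : a ^ β ≤ |x| ^ β := rpow_le_rpow ha.le hax.le hβ.le
        have h3 : |x| ^ (1 + β) = |x| * |x| ^ β := by
          rw [rpow_add (by linarith : (0:ℝ) < |x|), rpow_one]
        rw [h3]
        exact mul_le_mul_of_nonneg_left h2 (abs_nonneg x)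
      rw [rpow_neg ha.le, inv_mul_eq_div, le_div_iff₀ hb]
      exact h1
    have hx0 : x < 0 := by linarith
    have hxneg : |x| = -x := abs_of_neg hx0
    linarith [key]

lemma sq_cl_le {a x β : ℝ} (ha : 0 ≤ a) (hβ0 : 0 < β) (hβ1 : β ≤ 1) :
    (cl a x) ^ 2 ≤ a ^ (1 - β) * |x| ^ (1 + β) := by
  have ht0 : 0 ≤ |cl a x| := abs_nonneg _
  have h1 : (cl a x) ^ 2 = |cl a x| ^ ((2:ℕ):ℝ) := by
    rw [rpow_natCast, sq_abs]
  rcases eq_or_lt_of_le ht0 with h0 | h0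
  · have hc0 : cl a x = 0 := by
      have := h0.symm
      rwa [abs_eq_zero] at this
    rw [hc0]
    simpa using mul_nonneg (rpow_nonneg ha (1-β)) (rpow_nonneg (abs_nonneg x) (1+β))
  · rw [h1]
    have h2 : |cl a x| ^ ((2:ℕ):ℝ) = |cl a x| ^ (1+β) * |cl a x| ^ (1-β) := by
      rw [← rpow_add h0]; norm_num
    rw [h2]
    have h3 : |cl a x| ^ (1+β) ≤ |x| ^ (1+β) :=
      rpow_le_rpow ht0 (abs_cl_le_abs a x ha) (by linarith)
    have h4 : |cl a x| ^ (1-β) ≤ a ^ (1-β) :=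
      rpow_le_rpow ht0 (abs_cl_le a x ha) (by linarith)
    calc |cl a x| ^ (1+β) * |cl a x| ^ (1-β) ≤ |x| ^ (1+β) * a ^ (1-β) :=
      mul_le_mul h3 h4 (rpow_nonneg ht0 _) (rpow_nonneg (abs_nonneg x) _)
    _ = a ^ (1-β) * |x| ^ (1+β) := mul_comm _ _

lemma abs_le_one_add_rpow {x β : ℝ} (hβ : 0 ≤ β) : |x| ≤ 1 + |x| ^ (1 + β) := by
  rcases le_or_gt (|x|) 1 with h | h
  · have : 0 ≤ |x| ^ (1+β) := rpow_nonneg (abs_nonneg x) _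
    linarith
  · have h1 : |x| ^ (1:ℝ) ≤ |x| ^ (1 + β) :=
      rpow_le_rpow_of_exponent_le h.le (by linarith : (1:ℝ) ≤ 1 + β)
    rw [rpow_one] at h1
    linarith

lemma rpow_le_one_add_rpow {x β' β : ℝ} (h0 : 0 ≤ β') (hle : β' ≤ β) :
    |x| ^ (1 + β') ≤ 1 + |x| ^ (1 + β) := by
  rcases le_or_gt (|x|) 1 with h | h
  · have h1 : |x| ^ (1+β') ≤ 1 := rpow_le_one (abs_nonneg x) h (by linarith)
    have : 0 ≤ |x| ^ (1+β) := rpow_nonneg (abs_nonneg x) _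
    linarith
  · have h1 := rpow_le_rpow_of_exponent_le h.le (by linarith : (1:ℝ) + β' ≤ 1 + β)
    linarith

-- integrability helpers
lemma integrable_of_bdd {Ω : Type*} [MeasurableSpace Ω] {Q : Measure Ω} [IsFiniteMeasure Q]
    {f : Ω → ℝ} (hf : Measurable f) {C : ℝ} (h : ∀ ω, |f ω| ≤ C) : Integrable f Q :=
  (integrable_const C).mono' hf.aestronglyMeasurable
    (ae_of_all _ (fun ω => by rw [Real.norm_eq_abs]; exact h ω))

lemma integral_le_of_bdd {Ω : Type*} [MeasurableSpace Ω] {Q : Measure Ω} [IsProbabilityMeasure Q]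
    {f : Ω → ℝ} (hf : Measurable f) {C : ℝ} (h : ∀ ω, |f ω| ≤ C) : ∫ ω, f ω ∂Q ≤ C := by
  have h2 := integral_mono (μ := Q) (integrable_of_bdd hf h) (integrable_const C)
    (fun ω => (abs_le.1 (h ω)).2)
  simpa using h2


lemma summable_exp_neg_rpow (c δ : ℝ) (hc : 0 < c) (hδ : 0 < δ) :
    Summable (fun n : ℕ => Real.exp (-c * (n:ℝ) ^ δ)) := by
  have hlog : (fun x : ℝ => Real.log x) =o[atTop] fun x => x ^ δ := isLittleO_log_rpow_atTop hδ
  have h2 : ∀ᶠ x : ℝ in atTop, 2 * Real.log x ≤ c * x ^ δ := by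
    have := (hlog.bound (by positivity : (0:ℝ) < c/2)).and (eventually_ge_atTop (1:ℝ))
    filter_upwards [this] with x hx
    obtain ⟨hx, hx1⟩ := hx
    have hl : 0 ≤ Real.log x := Real.log_nonneg hx1
    rw [Real.norm_eq_abs, abs_of_nonneg hl, Real.norm_eq_abs, abs_of_nonneg (by positivity)] at hx
    nlinarith
  have h3 : ∀ᶠ n : ℕ in atTop, Real.exp (-c * (n:ℝ) ^ δ) ≤ 1/(n:ℝ)^(2:ℝ) := by
    have h4 := (tendsto_natCast_atTop_atTop (R := ℝ)).eventually h2
    filter_upwards [h4, eventually_ge_atTop 1] with n hn hn1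
    have hn0 : (0:ℝ) < (n:ℝ) := by exact_mod_cast hn1
    rw [one_div, ← Real.exp_log (x := ((n:ℝ)^(2:ℝ))) (by positivity), ← Real.exp_neg]
    apply Real.exp_le_exp.2
    rw [Real.log_rpow hn0]
    nlinarith
  apply summable_of_isBigO_nat (g := fun n : ℕ => 1/(n:ℝ)^(2:ℝ)) (summable_one_div_nat_rpow.2 one_lt_two)
  apply Asymptotics.IsBigO.of_bound 1
  filter_upwards [h3, eventually_ge_atTop 1] with n hn hn1
  have hn0 : (0:ℝ) < (n:ℝ) := by exact_mod_cast hn1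
  simp only [one_mul, Real.norm_eq_abs]
  rw [abs_of_nonneg (Real.exp_nonneg _), abs_of_nonneg (by positivity)]
  exact hn

section main
variable {Ω : Type*} [MeasurableSpace Ω] {Θ : Set (Measure Ω)}
  (hprob : ∀ P ∈ Θ, IsProbabilityMeasure P)
  {ξ : ℕ → Ω → ℝ} (hmeas : ∀ k, Measurable (ξ k))
  {β : ℝ} (hβ0 : 0 < β) (hβ1 : β ≤ 1) {M : ℝ} (hM : 1 ≤ M)
  (hint : ∀ Q ∈ Θ, ∀ k, Integrable (fun ω => |ξ k ω| ^ (1 + β)) Q)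
  (hmom : ∀ Q ∈ Θ, ∀ k, ∫ ω, |ξ k ω| ^ (1 + β) ∂Q ≤ M)

include hprob hmeas hβ0 hβ1 hM hint hmom

-- integrability of ξ 0 itself
lemma xi_integrable {Q : Measure Ω} (hQ : Q ∈ Θ) (k : ℕ) : Integrable (ξ k) Q := by
  haveI := hprob Q hQ
  refine Integrable.mono' ((integrable_const 1).add (hint Q hQ k)) (hmeas k).aestronglyMeasurable
    (ae_of_all _ (fun ω => ?_))
  rw [Real.norm_eq_abs]
  exact abs_le_one_add_rpow hβ0.le

-- uniform bound for integral of ξ 0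
lemma xi_int_bdd {Q : Measure Ω} (hQ : Q ∈ Θ) (k : ℕ) : ∫ ω, ξ k ω ∂Q ≤ 1 + M := by
  haveI := hprob Q hQ
  have h1 : ∫ ω, ξ k ω ∂Q ≤ ∫ ω, (1 + |ξ k ω| ^ (1+β)) ∂Q := by
    refine integral_mono (xi_integrable hprob hmeas hβ0 hβ1 hM hint hmom hQ k)
      ((integrable_const 1).add (hint Q hQ k)) (fun ω => ?_)
    have := abs_le_one_add_rpow (x := ξ k ω) hβ0.le
    have := le_abs_self (ξ k ω)
    linarith
  rw [integral_add (integrable_const 1) (hint Q hQ k)] at h1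
  simp only [integral_const, measure_univ, ENNReal.toReal_one, probReal_univ, smul_eq_mul, one_mul] at h1
  linarith [hmom Q hQ k]

-- the mean of the clamped variable is close to μ̄
lemma clamp_mean_le {a : ℝ} (ha : 0 < a) :
    SLE Θ (fun ω => cl a (ξ 0 ω)) ≤ SLE Θ (fun ω' => ξ 0 ω') + M * a ^ (-β) := by
  refine SLE_le' (fun hΘ => ?_) (fun Q hQ => ?_)
  · unfold SLE; rw [hΘ, Set.image_empty, Real.sSup_empty, zero_add]
    exact mul_nonneg (by linarith) (rpow_nonneg ha.le _)
  haveI := hprob Q hQ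
  have h1 : ∫ ω, cl a (ξ 0 ω) ∂Q ≤ ∫ ω, (ξ 0 ω + a ^ (-β) * |ξ 0 ω| ^ (1+β)) ∂Q := by
    refine integral_mono (integrable_of_bdd (measurable_cl (hmeas 0) a)
      (fun ω => abs_cl_le a _ ha.le))
      ((xi_integrable hprob hmeas hβ0 hβ1 hM hint hmom hQ 0).add ((hint Q hQ 0).const_mul _))
      (fun ω => cl_le_add ha hβ0)
  rw [integral_add (xi_integrable hprob hmeas hβ0 hβ1 hM hint hmom hQ 0)
    ((hint Q hQ 0).const_mul _), integral_const_mul] at h1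
  have h2 : ∫ ω, ξ 0 ω ∂Q ≤ SLE Θ (fun ω' => ξ 0 ω') :=
    le_SLE (fun Q' hQ' => xi_int_bdd hprob hmeas hβ0 hβ1 hM hint hmom hQ' 0) hQ
  have h3 : a ^ (-β) * ∫ ω, |ξ 0 ω| ^ (1+β) ∂Q ≤ a ^ (-β) * M :=
    mul_le_mul_of_nonneg_left (hmom Q hQ 0) (rpow_nonneg ha.le _)
  calc ∫ ω, cl a (ξ 0 ω) ∂Q ≤ ∫ ω, ξ 0 ω ∂Q + a ^ (-β) * ∫ ω, |ξ 0 ω| ^ (1+β) ∂Q := h1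
  _ ≤ SLE Θ (fun ω' => ξ 0 ω') + M * a ^ (-β) := by
      have := mul_comm (a ^ (-β)) M
      linarith

-- mgf bound for a single clamped variable
lemma mgf_le {a l : ℝ} (ha : 0 < a) (hl : 0 ≤ l) (hla : l * a ≤ 1) :
    SLE Θ (fun ω => Real.exp (l * cl a (ξ 0 ω))) ≤
      Real.exp (l * SLE Θ (fun ω => cl a (ξ 0 ω)) + 2 * l ^ 2 * M * a ^ (1 - β)) := by
  set m : ℝ := SLE Θ (fun ω => cl a (ξ 0 ω)) with hm
  refine SLE_le (Real.exp_nonneg _) (fun Q hQ => ?_)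
  haveI := hprob Q hQ
  -- pointwise bound
  have hpt : ∀ ω, Real.exp (l * cl a (ξ 0 ω)) ≤
      1 + l * cl a (ξ 0 ω) + 2 * l^2 * (a ^ (1-β) * |ξ 0 ω| ^ (1+β)) := by
    intro ω
    have h1 : |l * cl a (ξ 0 ω)| ≤ 1 := by
      rw [abs_mul, abs_of_nonneg hl]
      calc l * |cl a (ξ 0 ω)| ≤ l * a :=
        mul_le_mul_of_nonneg_left (abs_cl_le a _ ha.le) hl
      _ ≤ 1 := hla
    have h2 := exp_le_quadratic h1
    have h3 : (l * cl a (ξ 0 ω))^2 ≤ l^2 * (a ^ (1-β) * |ξ 0 ω| ^ (1+β)) := by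
      rw [mul_pow]
      exact mul_le_mul_of_nonneg_left (sq_cl_le ha.le hβ0 hβ1) (sq_nonneg l)
    nlinarith
  -- integrate
  have hintcl : Integrable (fun ω => cl a (ξ 0 ω)) Q :=
    integrable_of_bdd (measurable_cl (hmeas 0) a) (fun ω => abs_cl_le a _ ha.le)
  have hintrp : Integrable (fun ω => 2 * l^2 * (a ^ (1-β) * |ξ 0 ω| ^ (1+β))) Q := by
    have := ((hint Q hQ 0).const_mul (a ^ (1-β))).const_mul (2 * l^2)
    simpa [mul_assoc] using this
  have hexp_meas : Measurable (fun ω => Real.exp (l * cl a (ξ 0 ω))) :=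
    ((measurable_cl (hmeas 0) a).const_mul l).exp
  have hexp_bdd : ∀ ω, |Real.exp (l * cl a (ξ 0 ω))| ≤ Real.exp (l * a) := by
    intro ω
    rw [abs_of_nonneg (Real.exp_nonneg _)]
    apply Real.exp_le_exp.2
    exact mul_le_mul_of_nonneg_left (cl_le a _ ha.le) hl
  have hi1 : Integrable (fun ω => 1 + l * cl a (ξ 0 ω)) Q := by
    refine integrable_of_bdd (measurable_const.add ((measurable_cl (hmeas 0) a).const_mul l))
      (C := 1 + l * a) (fun ω => ?_)
    calc |1 + l * cl a (ξ 0 ω)| ≤ |1| + |l * cl a (ξ 0 ω)| := abs_add_le _ _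
    _ ≤ 1 + l * a := by
        rw [abs_one, abs_mul, abs_of_nonneg hl]
        have := mul_le_mul_of_nonneg_left (abs_cl_le a (ξ 0 ω) ha.le) hl
        linarith
  have h4 : ∫ ω, Real.exp (l * cl a (ξ 0 ω)) ∂Q ≤
      ∫ ω, (1 + l * cl a (ξ 0 ω) + 2 * l^2 * (a ^ (1-β) * |ξ 0 ω| ^ (1+β))) ∂Q := by
    refine integral_mono (integrable_of_bdd hexp_meas hexp_bdd) ?_ hpt
    exact hi1.add hintrp
  rw [integral_add hi1 hintrp,
      integral_add (integrable_const 1) (hintcl.const_mul l),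
      integral_const_mul, integral_const_mul, integral_const_mul] at h4
  simp only [integral_const, measure_univ, ENNReal.toReal_one, probReal_univ, smul_eq_mul, one_mul] at h4
  have h5 : ∫ ω, cl a (ξ 0 ω) ∂Q ≤ m :=
    le_SLE (fun Q' hQ' => by
      haveI := hprob Q' hQ'
      exact integral_le_of_bdd (measurable_cl (hmeas 0) a) (fun ω => abs_cl_le a _ ha.le)) hQ
  have h6 : ∫ ω, |ξ 0 ω| ^ (1+β) ∂Q ≤ M := hmom Q hQ 0
  have h7 : 1 + (l * m + 2 * l^2 * M * a^(1-β)) ≤ Real.exp (l * m + 2 * l^2 * M * a^(1-β)) := by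
    linarith [Real.add_one_le_exp (l * m + 2 * l^2 * M * a^(1-β))]
  have h8 : l * ∫ ω, cl a (ξ 0 ω) ∂Q ≤ l * m := mul_le_mul_of_nonneg_left h5 hl
  have h9 : 2 * l^2 * (a^(1-β) * ∫ ω, |ξ 0 ω| ^ (1+β) ∂Q) ≤ 2 * l^2 * M * a^(1-β) := by
    have h10 : a^(1-β) * ∫ ω, |ξ 0 ω| ^ (1+β) ∂Q ≤ a^(1-β) * M :=
      mul_le_mul_of_nonneg_left h6 (rpow_nonneg ha.le _)
    nlinarith [sq_nonneg l, rpow_nonneg ha.le (1-β)]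
  linarith

end main


lemma bddLip_exp_cl {l a : ℝ} (hl : 0 ≤ l) (ha : 0 ≤ a) :
    BddLip (fun x : ℝ => Real.exp (l * cl a x)) := by
  constructor
  · refine ⟨Real.exp (l * a), fun x => ?_⟩
    rw [abs_of_nonneg (Real.exp_nonneg _)]
    exact Real.exp_le_exp.2 (mul_le_mul_of_nonneg_left (cl_le a x ha) hl)
  · refine ⟨_, lipschitzWith_exp_comp hl (fun x y => ?_) (B := l * a)
      (fun x => mul_le_mul_of_nonneg_left (cl_le a x ha) hl)⟩
    rw [Real.dist_eq, Real.dist_eq, ← mul_sub, abs_mul, abs_of_nonneg hl]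
    exact mul_le_mul_of_nonneg_left (abs_cl_sub_cl a x y) hl

lemma bddLip_phi {l : ℝ} (hl : 0 ≤ l) (k : ℕ) (a : ℕ → ℝ) (ha : ∀ i, 0 < a i) :
    BddLip (fun p : (Fin (k+1) → ℝ) × ℝ =>
      Real.exp (l * ((∑ i : Fin (k+1), cl (a i) (p.1 i)) + cl (a (k+1)) p.2))) := by
  set B : ℝ := (∑ i : Fin (k+1), a i) + a (k+1) with hB
  have hsum : ∀ p : (Fin (k+1) → ℝ) × ℝ,
      (∑ i : Fin (k+1), cl (a i) (p.1 i)) + cl (a (k+1)) p.2 ≤ B := by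
    intro p
    refine add_le_add (Finset.sum_le_sum (fun i _ => cl_le _ _ (ha i).le))
      (cl_le _ _ (ha (k+1)).le)
  constructor
  · refine ⟨Real.exp (l * B), fun p => ?_⟩
    rw [abs_of_nonneg (Real.exp_nonneg _)]
    exact Real.exp_le_exp.2 (mul_le_mul_of_nonneg_left (hsum p) hl)
  · refine ⟨_, lipschitzWith_exp_comp (c := l * (k+2)) (by positivity) (fun p q => ?_)
      (B := l * B) (fun p => mul_le_mul_of_nonneg_left (hsum p) hl)⟩
    rw [Real.dist_eq, ← mul_sub, abs_mul, abs_of_nonneg hl]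
    have key : |((∑ i : Fin (k+1), cl (a i) (p.1 i)) + cl (a (k+1)) p.2) -
        ((∑ i : Fin (k+1), cl (a i) (q.1 i)) + cl (a (k+1)) q.2)| ≤ (k+2) * dist p q := by
      have h1 : ∀ i : Fin (k+1), |cl (a i) (p.1 i) - cl (a i) (q.1 i)| ≤ dist p q := by
        intro i
        calc |cl (a i) (p.1 i) - cl (a i) (q.1 i)| ≤ |p.1 i - q.1 i| := abs_cl_sub_cl _ _ _
        _ = dist (p.1 i) (q.1 i) := (Real.dist_eq _ _).symm
        _ ≤ dist p.1 q.1 := dist_le_pi_dist _ _ i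
        _ ≤ dist p q := by rw [Prod.dist_eq]; exact le_sup_left
      have h2 : |cl (a (k+1)) p.2 - cl (a (k+1)) q.2| ≤ dist p q := by
        calc |cl (a (k+1)) p.2 - cl (a (k+1)) q.2| ≤ |p.2 - q.2| := abs_cl_sub_cl _ _ _
        _ = dist p.2 q.2 := (Real.dist_eq _ _).symm
        _ ≤ dist p q := by rw [Prod.dist_eq]; exact le_sup_right
      have h3 : ((∑ i : Fin (k+1), cl (a i) (p.1 i)) + cl (a (k+1)) p.2) -
          ((∑ i : Fin (k+1), cl (a i) (q.1 i)) + cl (a (k+1)) q.2) =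
          (∑ i : Fin (k+1), (cl (a i) (p.1 i) - cl (a i) (q.1 i))) +
          (cl (a (k+1)) p.2 - cl (a (k+1)) q.2) := by
        rw [Finset.sum_sub_distrib]; ring
      rw [h3]
      calc |(∑ i : Fin (k+1), (cl (a i) (p.1 i) - cl (a i) (q.1 i))) +
          (cl (a (k+1)) p.2 - cl (a (k+1)) q.2)|
          ≤ |∑ i : Fin (k+1), (cl (a i) (p.1 i) - cl (a i) (q.1 i))| +
            |cl (a (k+1)) p.2 - cl (a (k+1)) q.2| := abs_add_le _ _
        _ ≤ (∑ i : Fin (k+1), |cl (a i) (p.1 i) - cl (a i) (q.1 i)|) + dist p q :=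
            add_le_add (Finset.abs_sum_le_sum_abs _ _) h2
        _ ≤ (∑ _i : Fin (k+1), dist p q) + dist p q :=
            add_le_add (Finset.sum_le_sum (fun i _ => h1 i)) le_rfl
        _ = (k+1) * dist p q + dist p q := by
            rw [Finset.sum_const, Finset.card_univ, Fintype.card_fin, nsmul_eq_mul]
            push_cast; ring
        _ = (k+2) * dist p q := by ring
    calc l * |((∑ i : Fin (k+1), cl (a i) (p.1 i)) + cl (a (k+1)) p.2) -
        ((∑ i : Fin (k+1), cl (a i) (q.1 i)) + cl (a (k+1)) q.2)|
        ≤ l * ((k+2) * dist p q) := mul_le_mul_of_nonneg_left key hl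
      _ = l * (k+2) * dist p q := by ring

section chernoff
variable {Ω : Type*} [MeasurableSpace Ω] {Θ : Set (Measure Ω)}

lemma chernoff_rec (hprob : ∀ P ∈ Θ, IsProbabilityMeasure P)
    {ξ : ℕ → Ω → ℝ} (hmeas : ∀ k, Measurable (ξ k))
    (hident : ∀ k, ∀ φ : ℝ → ℝ, BddLip φ → SLE Θ (fun ω => φ (ξ k ω)) = SLE Θ (fun ω => φ (ξ 0 ω)))
    (hindep : ∀ k : ℕ, IndepVec Θ (ξ (k + 1)) (fun ω (i : Fin (k + 1)) => ξ i ω))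
    {l : ℝ} (hl : 0 ≤ l) (a : ℕ → ℝ) (ha : ∀ i, 0 < a i) :
    ∀ n, SLE Θ (fun ω => Real.exp (l * ∑ i ∈ Finset.range n, cl (a i) (ξ i ω))) ≤
      ∏ i ∈ Finset.range n, SLE Θ (fun ω => Real.exp (l * cl (a i) (ξ 0 ω))) := by
  have hcnn : ∀ j, (0:ℝ) ≤ SLE Θ (fun ω => Real.exp (l * cl (a j) (ξ 0 ω))) := by
    intro j
    refine SLE_nonneg hprob (c := Real.exp (l * a j)) (fun Q hQ => ?_)
    haveI := hprob Q hQ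
    refine integral_le_of_bdd (((measurable_cl (hmeas 0) (a j)).const_mul l).exp)
      (C := Real.exp (l * a j)) (fun ω => ?_)
    rw [abs_of_nonneg (Real.exp_nonneg _)]
    exact Real.exp_le_exp.2 (mul_le_mul_of_nonneg_left (cl_le _ _ (ha j).le) hl)
  intro n
  induction n with
  | zero =>
      simp only [Finset.range_zero, Finset.sum_empty, Finset.prod_empty, mul_zero, Real.exp_zero]
      exact SLE_le zero_le_one (fun Q hQ => by haveI := hprob Q hQ; simp)
  | succ n ih =>
      match n, ih with
      | 0, _ =>
          simp only [zero_add, Finset.sum_range_one, Finset.prod_range_one]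
          exact le_rfl
      | (k+1), ih =>
          set φ : (Fin (k+1) → ℝ) × ℝ → ℝ := fun p =>
            Real.exp (l * ((∑ i : Fin (k+1), cl (a i) (p.1 i)) + cl (a (k+1)) p.2)) with hφ
          have hind := hindep k φ (bddLip_phi hl k a ha)
          have hL : (fun ω => φ (fun i : Fin (k+1) => ξ i ω, ξ (k+1) ω)) =
              fun ω => Real.exp (l * ∑ i ∈ Finset.range (k+1+1), cl (a i) (ξ i ω)) := by
            funext ω
            simp only [hφ]
            rw [Finset.sum_range_succ, Fin.sum_univ_eq_sum_range (fun i => cl (a i) (ξ i ω)) (k+1)]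
          have hid := hident (k+1) (fun x => Real.exp (l * cl (a (k+1)) x))
            (bddLip_exp_cl hl (ha (k+1)).le)
          have hc : ∀ ω, SLE Θ (fun ω' => φ (fun i : Fin (k+1) => ξ i ω, ξ (k+1) ω')) =
              Real.exp (l * ∑ i ∈ Finset.range (k+1), cl (a i) (ξ i ω)) *
                SLE Θ (fun ω' => Real.exp (l * cl (a (k+1)) (ξ 0 ω'))) := by
            intro ω
            have heq : (fun ω' => φ (fun i : Fin (k+1) => ξ i ω, ξ (k+1) ω')) =
                fun ω' => Real.exp (l * ∑ i ∈ Finset.range (k+1), cl (a i) (ξ i ω)) *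
                  Real.exp (l * cl (a (k+1)) (ξ (k+1) ω')) := by
              funext ω'
              simp only [hφ]
              rw [mul_add, Real.exp_add,
                Fin.sum_univ_eq_sum_range (fun i => cl (a i) (ξ i ω)) (k+1)]
            rw [heq, SLE_const_mul (Real.exp_nonneg _), hid]
          calc SLE Θ (fun ω => Real.exp (l * ∑ i ∈ Finset.range (k+1+1), cl (a i) (ξ i ω)))
              = SLE Θ (fun ω => SLE Θ (fun ω' =>
                  φ (fun i : Fin (k+1) => ξ i ω, ξ (k+1) ω'))) := by rw [← hL]; exact hind
            _ = SLE Θ (fun ω => SLE Θ (fun ω' => Real.exp (l * cl (a (k+1)) (ξ 0 ω'))) *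
                  Real.exp (l * ∑ i ∈ Finset.range (k+1), cl (a i) (ξ i ω))) := by
                congr 1
                funext ω
                rw [hc ω, mul_comm]
            _ = SLE Θ (fun ω' => Real.exp (l * cl (a (k+1)) (ξ 0 ω'))) *
                  SLE Θ (fun ω => Real.exp (l * ∑ i ∈ Finset.range (k+1), cl (a i) (ξ i ω))) :=
                SLE_const_mul (hcnn (k+1))
            _ ≤ SLE Θ (fun ω' => Real.exp (l * cl (a (k+1)) (ξ 0 ω'))) *
                  ∏ i ∈ Finset.range (k+1), SLE Θ (fun ω => Real.exp (l * cl (a i) (ξ 0 ω))) :=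
                mul_le_mul_of_nonneg_left ih (hcnn (k+1))
            _ = ∏ i ∈ Finset.range (k+1+1), SLE Θ (fun ω => Real.exp (l * cl (a i) (ξ 0 ω))) := by
                rw [Finset.prod_range_succ _ (k+1)]; exact mul_comm _ _

end chernoff


section key
variable {Ω : Type*} [MeasurableSpace Ω] {Θ : Set (Measure Ω)}

set_option maxHeartbeats 2000000 in
lemma key_upper (hprob : ∀ P ∈ Θ, IsProbabilityMeasure P)
    {ξ : ℕ → Ω → ℝ} (hmeas : ∀ k, Measurable (ξ k))
    (hident : ∀ k, ∀ φ : ℝ → ℝ, BddLip φ → SLE Θ (fun ω => φ (ξ k ω)) = SLE Θ (fun ω => φ (ξ 0 ω)))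
    (hindep : ∀ k : ℕ, IndepVec Θ (ξ (k + 1)) (fun ω (i : Fin (k + 1)) => ξ i ω))
    {β : ℝ} (hβ0 : 0 < β) (hβ1 : β ≤ 1) {M : ℝ} (hM : 1 ≤ M)
    (hint : ∀ Q ∈ Θ, ∀ k, Integrable (fun ω => |ξ k ω| ^ (1 + β)) Q)
    (hmom : ∀ Q ∈ Θ, ∀ k, ∫ ω, |ξ k ω| ^ (1 + β) ∂Q ≤ M)
    {P : Measure Ω} (hP : P ∈ Θ) {ε : ℝ} (hε : 0 < ε) :
    ∀ᵐ ω ∂P, ∀ᶠ n : ℕ in atTop,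
      (∑ i ∈ Finset.range n, ξ i ω) / n ≤ SLE Θ (fun ω' => ξ 0 ω') + ε := by
  haveI := hprob P hP
  set μ : ℝ := SLE Θ (fun ω' => ξ 0 ω') with hμ
  set ε' : ℝ := ε / 2 with hε'
  have hε'0 : 0 < ε' := by positivity
  set γ : ℝ := 2 / (2 + β) with hγ
  have h2β : (0:ℝ) < 2 + β := by linarith
  have hγ0 : 0 < γ := by positivity
  have hγ1 : γ < 1 := by
    rw [hγ, div_lt_one h2β]; linarith
  have hγβ : 1 < γ * (1 + β) := by
    rw [hγ, div_mul_eq_mul_div, lt_div_iff₀ h2β]; linarith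
  have hM0 : (0:ℝ) < M := by linarith
  set A : ℝ := max 1 ((6 * M / ε') ^ (β⁻¹)) with hA
  have hA1 : 1 ≤ A := le_max_left _ _
  have hA0 : 0 < A := by linarith
  have h6M : (0:ℝ) < 6 * M / ε' := by positivity
  have hAβ : 6 * M / ε' ≤ A ^ β := by
    have h1 : ((6 * M / ε') ^ (β⁻¹)) ^ β ≤ A ^ β :=
      rpow_le_rpow (rpow_nonneg h6M.le _) (le_max_right _ _) hβ0.le
    rwa [← rpow_mul h6M.le, inv_mul_cancel₀ hβ0.ne', rpow_one] at h1
  have hAb0 : (0:ℝ) < A ^ β := rpow_pos_of_pos hA0 β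
  have hAnegβ : A ^ (-β) = (A ^ β)⁻¹ := rpow_neg hA0.le β
  have hAnegβ0 : 0 ≤ A ^ (-β) := rpow_nonneg hA0.le _
  have hA6 : 3 * M * A ^ (-β) ≤ ε' / 2 := by
    have h2 : (A ^ β)⁻¹ ≤ (6 * M / ε')⁻¹ := inv_anti₀ h6M hAβ
    have h3 : 3 * M * (6 * M / ε')⁻¹ = ε' / 2 := by
      field_simp
      ring
    rw [hAnegβ]
    calc 3 * M * (A ^ β)⁻¹ ≤ 3 * M * (6 * M / ε')⁻¹ :=
      mul_le_mul_of_nonneg_left h2 (by linarith)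
    _ = ε' / 2 := h3
  -- the truncation levels
  set a : ℕ → ℝ := fun i => A * ((i:ℝ) + 1) ^ γ with ha_def
  have ha : ∀ i, 0 < a i := fun i => by
    have : (0:ℝ) < ((i:ℝ) + 1) ^ γ := rpow_pos_of_pos (by positivity) γ
    positivity
  have haA : ∀ i, A ≤ a i := fun i => by
    have h1 : (1:ℝ) ≤ ((i:ℝ) + 1) ^ γ := one_le_rpow (by push_cast; linarith [Nat.cast_nonneg (α := ℝ) i]) hγ0.le
    calc A = A * 1 := (mul_one A).symm
    _ ≤ A * ((i:ℝ) + 1) ^ γ := mul_le_mul_of_nonneg_left h1 hA0.le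
  have hanegβ : ∀ i, (a i) ^ (-β) ≤ A ^ (-β) := fun i => by
    rw [hAnegβ, rpow_neg (ha i).le]
    exact inv_anti₀ hAb0 (rpow_le_rpow hA0.le (haA i) hβ0.le)
  -- Borel-Cantelli part 1: tails
  set s1 : ℕ → Set Ω := fun i => {ω | a i < |ξ i ω|} with hs1
  have hBC1sum : ∑' i, P (s1 i) ≠ ⊤ := by
    have hb : ∀ i, P (s1 i) ≤ ENNReal.ofReal (M * (a i) ^ (-(1+β))) := by
      intro i
      have hmar := mul_meas_ge_le_integral_of_nonneg
        (ae_of_all P (fun ω => rpow_nonneg (abs_nonneg (ξ i ω)) (1+β)))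
        (hint P hP i) ((a i) ^ (1+β))
      have hsub : s1 i ⊆ {ω | (a i) ^ (1+β) ≤ |ξ i ω| ^ (1+β)} := by
        intro ω hω
        exact rpow_le_rpow (ha i).le (le_of_lt hω) (by linarith)
      have hai0 : (0:ℝ) < (a i) ^ (1+β) := rpow_pos_of_pos (ha i) _
      have h1 : (P (s1 i)).toReal ≤ M * (a i) ^ (-(1+β)) := by
        have h2 : (P (s1 i)).toReal ≤ (P {ω | (a i) ^ (1+β) ≤ |ξ i ω| ^ (1+β)}).toReal :=
          ENNReal.toReal_mono (measure_ne_top P _) (measure_mono hsub)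
        have h3 : (P {ω | (a i) ^ (1+β) ≤ |ξ i ω| ^ (1+β)}).toReal ≤
            (∫ ω, |ξ i ω| ^ (1+β) ∂P) / (a i) ^ (1+β) := by
          rw [le_div_iff₀ hai0]
          calc (P {ω | (a i) ^ (1+β) ≤ |ξ i ω| ^ (1+β)}).toReal * (a i) ^ (1+β)
              = (a i) ^ (1+β) * (P {ω | (a i) ^ (1+β) ≤ |ξ i ω| ^ (1+β)}).toReal := mul_comm _ _
          _ ≤ ∫ ω, |ξ i ω| ^ (1+β) ∂P := hmar
        have h4 : (∫ ω, |ξ i ω| ^ (1+β) ∂P) / (a i) ^ (1+β) ≤ M * (a i) ^ (-(1+β)) := by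
          rw [rpow_neg (ha i).le, div_eq_mul_inv]
          exact mul_le_mul_of_nonneg_right (hmom P hP i) (by positivity)
        linarith
      calc P (s1 i) = ENNReal.ofReal ((P (s1 i)).toReal) :=
        (ENNReal.ofReal_toReal (measure_ne_top P _)).symm
      _ ≤ ENNReal.ofReal (M * (a i) ^ (-(1+β))) := ENNReal.ofReal_le_ofReal h1
    have hsummable : Summable (fun i : ℕ => M * (a i) ^ (-(1+β))) := by
      have heq : ∀ i : ℕ, M * (a i) ^ (-(1+β)) =
          (M * A ^ (-(1+β))) * (((i:ℝ) + 1) ^ (-(γ * (1 + β)))) := by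
        intro i
        have hi0 : (0:ℝ) ≤ (i:ℝ) + 1 := by positivity
        have h1 : (a i) ^ (-(1+β)) = A ^ (-(1+β)) * (((i:ℝ)+1) ^ (-(γ * (1+β)))) := by
          show (A * ((i:ℝ) + 1) ^ γ) ^ (-(1+β)) = _
          rw [mul_rpow hA0.le (rpow_nonneg hi0 γ), ← rpow_mul hi0,
            show γ * (-(1+β)) = -(γ*(1+β)) by ring]
        rw [h1]; ring
      have hbase : Summable (fun i : ℕ => ((i:ℝ) + 1) ^ (-(γ * (1 + β)))) := by
        have h2 : Summable (fun n : ℕ => 1 / ((n:ℝ)) ^ (γ * (1+β))) :=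
          summable_one_div_nat_rpow.2 hγβ
        have h3 := (summable_nat_add_iff 1).2 h2
        refine h3.congr (fun n => ?_)
        rw [rpow_neg (by positivity : (0:ℝ) ≤ (n:ℝ)+1), ← one_div]
        push_cast
        ring_nf
      exact (hbase.mul_left _).congr (fun i => (heq i).symm)
    refine ne_top_of_le_ne_top ?_ (ENNReal.tsum_le_tsum hb)
    rw [← ENNReal.ofReal_tsum_of_nonneg (fun i => mul_nonneg hM0.le (rpow_nonneg (ha i).le _))
      hsummable]
    exact ENNReal.ofReal_ne_top
  have hBC1 : ∀ᵐ ω ∂P, ∀ᶠ i : ℕ in atTop, ω ∉ s1 i := ae_eventually_notMem hBC1sum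
  -- Chernoff part
  set T : ℕ → Ω → ℝ := fun n ω => ∑ i ∈ Finset.range n, cl (a i) (ξ i ω) with hT
  set s2 : ℕ → Set Ω := fun n => {ω | (n:ℝ) * (μ + ε') ≤ T n ω} with hs2
  set cδ : ℝ := ε' / 2 * A⁻¹ with hcδ
  have hcδ0 : 0 < cδ := by positivity
  have hTmeas : ∀ n, Measurable (T n) := by
    intro n
    exact Finset.measurable_sum _ (fun i _ => measurable_cl (hmeas i) (a i))
  have hchern : ∀ n : ℕ, (P (s2 n)).toReal ≤ Real.exp (-cδ * (n:ℝ) ^ (1 - γ)) := by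
    intro n
    rcases Nat.eq_zero_or_pos n with hn0 | hn1
    · subst hn0
      have h1 : (P (s2 0)).toReal ≤ 1 := by
        have := prob_le_one (μ := P) (s := s2 0)
        calc (P (s2 0)).toReal ≤ (1 : ENNReal).toReal := ENNReal.toReal_mono (by simp) this
        _ = 1 := by simp
      simpa [Real.zero_rpow (show (1:ℝ) - γ ≠ 0 by linarith), Real.exp_zero] using h1
    · have hn0R : (0:ℝ) < (n:ℝ) := by exact_mod_cast hn1
      have hn1R : (1:ℝ) ≤ (n:ℝ) := by exact_mod_cast hn1
      set l : ℝ := A⁻¹ * (n:ℝ) ^ (-γ) with hl_def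
      have hl0 : 0 < l := by
        have : (0:ℝ) < (n:ℝ) ^ (-γ) := rpow_pos_of_pos hn0R _
        positivity
      -- l * a i ≤ 1 for i < n
      have hla : ∀ i : ℕ, i < n → l * a i ≤ 1 := by
        intro i hi
        have hi1n : ((i:ℝ) + 1) ≤ (n:ℝ) := by exact_mod_cast Nat.succ_le_of_lt hi
        have h1 : l * a i = ((i:ℝ)+1) ^ γ * ((n:ℝ) ^ γ)⁻¹ := by
          show A⁻¹ * (n:ℝ) ^ (-γ) * (A * ((i:ℝ) + 1) ^ γ) = _
          rw [rpow_neg hn0R.le]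
          field_simp
        have hpos : (0:ℝ) < (n:ℝ) ^ γ := rpow_pos_of_pos hn0R γ
        rw [h1, ← div_eq_mul_inv, div_le_one hpos]
        exact rpow_le_rpow (by positivity) hi1n hγ0.le
      -- per-factor mgf bound
      have hfac : ∀ i : ℕ, i < n →
          SLE Θ (fun ω => Real.exp (l * cl (a i) (ξ 0 ω))) ≤
            Real.exp (l * (μ + 3 * M * A ^ (-β))) := by
        intro i hi
        have hi0 : (0:ℝ) ≤ (i:ℝ) + 1 := by positivity
        have hi1n : ((i:ℝ) + 1) ≤ (n:ℝ) := by exact_mod_cast Nat.succ_le_of_lt hi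
        have h1 := mgf_le hprob hmeas hβ0 hβ1 hM hint hmom (ha i) hl0.le (hla i hi)
        refine h1.trans (Real.exp_le_exp.2 ?_)
        have hm := clamp_mean_le hprob hmeas hβ0 hβ1 hM hint hmom (ha i)
        have hm2 : SLE Θ (fun ω => cl (a i) (ξ 0 ω)) ≤ μ + M * A ^ (-β) := by
          have h3 : M * (a i) ^ (-β) ≤ M * A ^ (-β) :=
            mul_le_mul_of_nonneg_left (hanegβ i) hM0.le
          rw [← hμ] at hm
          linarith
        have hterm1 : l * SLE Θ (fun ω => cl (a i) (ξ 0 ω)) ≤ l * (μ + M * A ^ (-β)) :=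
          mul_le_mul_of_nonneg_left hm2 hl0.le
        have hkey : l * (a i) ^ (1 - β) ≤ A ^ (-β) := by
          have e1 : (a i) ^ (1-β) = A ^ (1-β) * (((i:ℝ)+1) ^ (γ*(1-β))) := by
            show (A * ((i:ℝ) + 1) ^ γ) ^ (1-β) = _
            rw [mul_rpow hA0.le (rpow_nonneg hi0 γ), ← rpow_mul hi0]
          have e2 : A⁻¹ * A ^ (1-β) = A ^ (-β) := by
            have e3 : A ^ ((1:ℝ)-β) = A * A ^ (-β) := by
              rw [show (1:ℝ)-β = 1 + (-β) by ring, rpow_add hA0, rpow_one]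
            rw [e3, ← mul_assoc, inv_mul_cancel₀ hA0.ne', one_mul]
          have hnpart : (n:ℝ) ^ (-γ) * (((i:ℝ)+1) ^ (γ*(1-β))) ≤ 1 := by
            have p1 : ((i:ℝ)+1) ^ (γ*(1-β)) ≤ (n:ℝ) ^ (γ*(1-β)) :=
              rpow_le_rpow hi0 hi1n (mul_nonneg hγ0.le (by linarith))
            have p2 : (n:ℝ) ^ (-γ) * (n:ℝ) ^ (γ*(1-β)) = (n:ℝ) ^ (-(γ*β)) := by
              rw [← rpow_add hn0R]; congr 1; ring
            have p3 : (n:ℝ) ^ (-(γ*β)) ≤ 1 :=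
              rpow_le_one_of_one_le_of_nonpos hn1R (by nlinarith [mul_pos hγ0 hβ0])
            calc (n:ℝ) ^ (-γ) * (((i:ℝ)+1) ^ (γ*(1-β)))
                ≤ (n:ℝ) ^ (-γ) * ((n:ℝ) ^ (γ*(1-β))) :=
                  mul_le_mul_of_nonneg_left p1 (rpow_nonneg hn0R.le _)
              _ = (n:ℝ) ^ (-(γ*β)) := p2
              _ ≤ 1 := p3
          have e4 : l * (a i) ^ (1-β) =
              (A⁻¹ * A ^ (1-β)) * ((n:ℝ) ^ (-γ) * (((i:ℝ)+1) ^ (γ*(1-β)))) := by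
            rw [hl_def, e1]; ring
          rw [e4, e2]
          exact mul_le_of_le_one_right hAnegβ0 hnpart
        have hterm2 : 2 * l^2 * M * (a i) ^ (1-β) ≤ 2 * M * l * A ^ (-β) := by
          calc 2 * l^2 * M * (a i) ^ (1-β) = 2 * M * l * (l * (a i) ^ (1-β)) := by ring
          _ ≤ 2 * M * l * A ^ (-β) :=
              mul_le_mul_of_nonneg_left hkey (by positivity)
        have hexpand : l * (μ + 3 * M * A ^ (-β)) =
            l * (μ + M * A ^ (-β)) + 2 * M * l * A ^ (-β) := by ring
        rw [hexpand]
        linarith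
      -- nonnegativity of each factor
      have hcnn : ∀ i : ℕ, (0:ℝ) ≤ SLE Θ (fun ω => Real.exp (l * cl (a i) (ξ 0 ω))) := by
        intro i
        refine SLE_nonneg hprob (c := Real.exp (l * a i)) (fun Q hQ => ?_)
        haveI := hprob Q hQ
        refine integral_le_of_bdd (((measurable_cl (hmeas 0) (a i)).const_mul l).exp) (fun ω => ?_)
        rw [abs_of_nonneg (Real.exp_nonneg _)]
        exact Real.exp_le_exp.2 (mul_le_mul_of_nonneg_left (cl_le _ _ (ha i).le) hl0.le)
      -- product bound
      have hprod := chernoff_rec hprob hmeas hident hindep hl0.le a ha n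
      have hprod2 : ∏ i ∈ Finset.range n, SLE Θ (fun ω => Real.exp (l * cl (a i) (ξ 0 ω))) ≤
          Real.exp ((n:ℝ) * (l * (μ + 3 * M * A ^ (-β)))) := by
        calc ∏ i ∈ Finset.range n, SLE Θ (fun ω => Real.exp (l * cl (a i) (ξ 0 ω)))
            ≤ ∏ _i ∈ Finset.range n, Real.exp (l * (μ + 3 * M * A ^ (-β))) :=
              Finset.prod_le_prod (fun i _ => hcnn i)
                (fun i hi => hfac i (Finset.mem_range.1 hi))
          _ = Real.exp (l * (μ + 3 * M * A ^ (-β))) ^ n := by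
              rw [Finset.prod_const, Finset.card_range]
          _ = Real.exp ((n:ℝ) * (l * (μ + 3 * M * A ^ (-β)))) := by
              rw [← Real.exp_nat_mul]
      -- bound for exp of T n
      have hbd : ∀ ω, |Real.exp (l * T n ω)| ≤ Real.exp (l * ∑ i ∈ Finset.range n, a i) := by
        intro ω
        rw [abs_of_nonneg (Real.exp_nonneg _)]
        refine Real.exp_le_exp.2 (mul_le_mul_of_nonneg_left ?_ hl0.le)
        exact Finset.sum_le_sum (fun i _ => cl_le _ _ (ha i).le)
      have hSLE_T : SLE Θ (fun ω => Real.exp (l * T n ω)) ≤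
          Real.exp ((n:ℝ) * (l * (μ + 3 * M * A ^ (-β)))) := le_trans hprod hprod2
      have hintexp : Integrable (fun ω => Real.exp (l * T n ω)) P :=
        integrable_of_bdd (((hTmeas n).const_mul l).exp) hbd
      have hle_SLE : ∫ ω, Real.exp (l * T n ω) ∂P ≤ SLE Θ (fun ω => Real.exp (l * T n ω)) := by
        refine le_SLE (c := Real.exp (l * ∑ i ∈ Finset.range n, a i)) (fun Q hQ => ?_) hP
        haveI := hprob Q hQ
        exact integral_le_of_bdd (((hTmeas n).const_mul l).exp) hbd
      set E : ℝ := Real.exp (l * ((n:ℝ) * (μ + ε'))) with hE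
      have hEpos : 0 < E := Real.exp_pos _
      have hmar := mul_meas_ge_le_integral_of_nonneg
        (ae_of_all P (fun ω => Real.exp_nonneg (l * T n ω))) hintexp E
      have hsub : s2 n ⊆ {ω | E ≤ Real.exp (l * T n ω)} := by
        intro ω hω
        exact Real.exp_le_exp.2 (mul_le_mul_of_nonneg_left hω hl0.le)
      have hPT : (P (s2 n)).toReal ≤
          Real.exp ((n:ℝ) * (l * (μ + 3 * M * A ^ (-β))) - l * ((n:ℝ) * (μ + ε'))) := by
        rw [Real.exp_sub, ← hE, le_div_iff₀ hEpos]
        calc (P (s2 n)).toReal * E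
            ≤ (P {ω | E ≤ Real.exp (l * T n ω)}).toReal * E :=
              mul_le_mul_of_nonneg_right
                (ENNReal.toReal_mono (measure_ne_top P _) (measure_mono hsub)) hEpos.le
          _ = E * (P {ω | E ≤ Real.exp (l * T n ω)}).toReal := mul_comm _ _
          _ ≤ ∫ ω, Real.exp (l * T n ω) ∂P := hmar
          _ ≤ Real.exp ((n:ℝ) * (l * (μ + 3 * M * A ^ (-β)))) := le_trans hle_SLE hSLE_T
      refine hPT.trans (Real.exp_le_exp.2 ?_)
      have hnl : (n:ℝ) * l = A⁻¹ * (n:ℝ) ^ (1-γ) := by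
        rw [hl_def, show (1:ℝ)-γ = 1 + (-γ) by ring, rpow_add hn0R, rpow_one]
        ring
      have hnl0 : 0 ≤ (n:ℝ) * l := by positivity
      have hexp2 : (n:ℝ) * (l * (μ + 3 * M * A ^ (-β))) - l * ((n:ℝ) * (μ + ε')) =
          ((n:ℝ) * l) * (3 * M * A ^ (-β) - ε') := by ring
      rw [hexp2]
      calc ((n:ℝ) * l) * (3 * M * A ^ (-β) - ε') ≤ ((n:ℝ) * l) * (-(ε'/2)) :=
        mul_le_mul_of_nonneg_left (by linarith) hnl0
      _ = -cδ * (n:ℝ) ^ (1-γ) := by rw [hnl, hcδ]; ring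
  -- Borel-Cantelli part 2
  have hBC2sum : ∑' n, P (s2 n) ≠ ⊤ := by
    have hb : ∀ n, P (s2 n) ≤ ENNReal.ofReal (Real.exp (-cδ * (n:ℝ) ^ (1-γ))) := by
      intro n
      calc P (s2 n) = ENNReal.ofReal ((P (s2 n)).toReal) :=
        (ENNReal.ofReal_toReal (measure_ne_top P _)).symm
      _ ≤ ENNReal.ofReal (Real.exp (-cδ * (n:ℝ) ^ (1-γ))) :=
        ENNReal.ofReal_le_ofReal (hchern n)
    have hsummable : Summable (fun n : ℕ => Real.exp (-cδ * (n:ℝ) ^ (1-γ))) :=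
      summable_exp_neg_rpow cδ (1-γ) hcδ0 (by linarith)
    refine ne_top_of_le_ne_top ?_ (ENNReal.tsum_le_tsum hb)
    rw [← ENNReal.ofReal_tsum_of_nonneg (fun n => Real.exp_nonneg _) hsummable]
    exact ENNReal.ofReal_ne_top
  have hBC2 : ∀ᵐ ω ∂P, ∀ᶠ n : ℕ in atTop, ω ∉ s2 n := ae_eventually_notMem hBC2sum
  -- combine
  filter_upwards [hBC1, hBC2] with ω h1 h2
  obtain ⟨N₁, hN₁⟩ := eventually_atTop.1 h1
  set C : ℝ := ∑ i ∈ Finset.range N₁, (ξ i ω - cl (a i) (ξ i ω)) with hC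
  have hST : ∀ n, N₁ ≤ n → ∑ i ∈ Finset.range n, ξ i ω = T n ω + C := by
    intro n hn
    have h3 : ∑ i ∈ Finset.range n, (ξ i ω - cl (a i) (ξ i ω)) = C := by
      refine (Finset.sum_subset (Finset.range_subset_range.2 hn) (fun i hi hni => ?_)).symm
      have hiN : N₁ ≤ i := le_of_not_gt (fun hlt => hni (Finset.mem_range.2 hlt))
      have := hN₁ i hiN
      have habs : |ξ i ω| ≤ a i := le_of_not_gt this
      rw [cl_eq_self habs, sub_self]
    rw [hT]
    rw [← h3, Finset.sum_sub_distrib]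
    ring
  have hCn : Tendsto (fun n : ℕ => C / (n:ℝ)) atTop (𝓝 0) :=
    tendsto_const_div_atTop_nhds_zero_nat C
  have hCev : ∀ᶠ n : ℕ in atTop, C / (n:ℝ) < ε / 2 :=
    hCn.eventually_lt_const (by linarith)
  filter_upwards [h2, eventually_ge_atTop N₁, eventually_ge_atTop 1, hCev] with n hn2 hnN hn1 hCle
  have hn0R : (0:ℝ) < (n:ℝ) := by exact_mod_cast hn1
  have hTn : T n ω < (n:ℝ) * (μ + ε') := lt_of_not_ge hn2
  rw [hST n hnN, add_div]
  have hdiv : T n ω / (n:ℝ) ≤ μ + ε' := by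
    rw [div_le_iff₀ hn0R]
    linarith [hTn]
  rw [hε'] at hdiv
  linarith [hdiv, hCle]

end key


lemma lipschitzWith_neg' {E : Type*} [SeminormedAddCommGroup E] :
    LipschitzWith 1 (fun x : E => -x) :=
  LipschitzWith.of_dist_le_mul (fun x y => by rw [dist_neg_neg]; simp)

section negtrans
variable {Ω : Type*} [MeasurableSpace Ω] {Θ : Set (Measure Ω)}

lemma bddLip_comp_neg {φ : ℝ → ℝ} (hφ : BddLip φ) : BddLip (fun x : ℝ => φ (-x)) := by
  obtain ⟨⟨C, hC⟩, ⟨K, hK⟩⟩ := hφ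
  exact ⟨⟨C, fun x => hC (-x)⟩, ⟨K * 1, hK.comp lipschitzWith_neg'⟩⟩

lemma ident_neg {ξ : ℕ → Ω → ℝ}
    (hident : ∀ k, ∀ φ : ℝ → ℝ, BddLip φ →
      SLE Θ (fun ω => φ (ξ k ω)) = SLE Θ (fun ω => φ (ξ 0 ω))) :
    ∀ k, ∀ φ : ℝ → ℝ, BddLip φ →
      SLE Θ (fun ω => φ (-ξ k ω)) = SLE Θ (fun ω => φ (-ξ 0 ω)) :=
  fun k φ hφ => hident k (fun x => φ (-x)) (bddLip_comp_neg hφ)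

lemma indep_neg {ξ : ℕ → Ω → ℝ}
    (hindep : ∀ k : ℕ, IndepVec Θ (ξ (k + 1)) (fun ω (i : Fin (k + 1)) => ξ i ω)) :
    ∀ k : ℕ, IndepVec Θ (fun ω => -ξ (k + 1) ω) (fun ω (i : Fin (k + 1)) => -ξ i ω) := by
  intro k φ hφ
  set ψ : (Fin (k+1) → ℝ) × ℝ → ℝ := fun p => φ (-p.1, -p.2) with hψ
  have hψbl : BddLip ψ := by
    obtain ⟨⟨C, hC⟩, ⟨K, hK⟩⟩ := hφ
    have h1 : LipschitzWith ((1*1) ⊔ (1*1)) (fun p : (Fin (k+1) → ℝ) × ℝ => (-p.1, -p.2)) :=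
      ((lipschitzWith_neg' (E := Fin (k+1) → ℝ)).comp LipschitzWith.prod_fst).prodMk
        ((lipschitzWith_neg' (E := ℝ)).comp LipschitzWith.prod_snd)
    exact ⟨⟨C, fun p => hC _⟩, ⟨_, hK.comp h1⟩⟩
  exact hindep k ψ hψbl

end negtrans


set_option maxHeartbeats 1000000 in
/-- Theorem `LLN-bound`: if `(ξ_k)` is i.i.d. under the sublinear
expectation `𝔼 = sup_{P ∈ Θ} E_P` and `𝔼[|ξ_1|^{1+β}] < ∞` for some `β > 0`, then for
every `P ∈ Θ`, `P`-a.s. `μ̲ ≤ liminf ξ̄_n ≤ limsup ξ̄_n ≤ μ̄`, where `μ̄ = 𝔼[ξ_1]`,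
`μ̲ = -𝔼[-ξ_1]` and `ξ̄_n = (ξ_1 + ⋯ + ξ_n)/n`. -/
theorem stmt0 {Ω : Type*} [MeasurableSpace Ω] (Θ : Set (Measure Ω)) (hne : Θ.Nonempty)
    (hprob : ∀ P ∈ Θ, IsProbabilityMeasure P)
    (ξ : ℕ → Ω → ℝ) (hmeas : ∀ k, Measurable (ξ k))
    (hiid : IsIID Θ ξ)
    (β : ℝ) (hβ : 0 < β)
    (hint : ∀ Q ∈ Θ, ∀ k, Integrable (fun ω => |ξ k ω| ^ (1 + β)) Q)
    (hmom : ∃ M : ℝ, ∀ Q ∈ Θ, ∀ k, ∫ ω, |ξ k ω| ^ (1 + β) ∂Q ≤ M)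
    (P : Measure Ω) (hP : P ∈ Θ) :
    ∀ᵐ ω ∂P,
      ((-SLE Θ (fun ω' => -ξ 0 ω') : ℝ) : EReal) ≤
          Filter.liminf (fun n : ℕ => (((∑ i ∈ Finset.range n, ξ i ω) / n : ℝ) : EReal)) atTop ∧
      Filter.liminf (fun n : ℕ => (((∑ i ∈ Finset.range n, ξ i ω) / n : ℝ) : EReal)) atTop ≤
          Filter.limsup (fun n : ℕ => (((∑ i ∈ Finset.range n, ξ i ω) / n : ℝ) : EReal)) atTop ∧
      Filter.limsup (fun n : ℕ => (((∑ i ∈ Finset.range n, ξ i ω) / n : ℝ) : EReal)) atTop ≤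
          ((SLE Θ (fun ω' => ξ 0 ω') : ℝ) : EReal) := by
  obtain ⟨M₀, hM₀⟩ := hmom
  set β' : ℝ := min β 1 with hβ'def
  have hβ'0 : 0 < β' := lt_min hβ zero_lt_one
  have hβ'1 : β' ≤ 1 := min_le_right _ _
  have hβ'β : β' ≤ β := min_le_left _ _
  set M : ℝ := max (1 + M₀) 1 with hMdef
  have hM1 : 1 ≤ M := le_max_right _ _
  have hint' : ∀ Q ∈ Θ, ∀ k, Integrable (fun ω => |ξ k ω| ^ (1 + β')) Q := by
    intro Q hQ k
    haveI := hprob Q hQ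
    refine Integrable.mono' ((integrable_const 1).add (hint Q hQ k)) ?_
      (ae_of_all _ fun ω => ?_)
    · exact ((Real.continuous_rpow_const (by positivity)).measurable.comp
        (hmeas k).abs).aestronglyMeasurable
    · rw [Real.norm_eq_abs, abs_of_nonneg (rpow_nonneg (abs_nonneg _) _)]
      exact rpow_le_one_add_rpow hβ'0.le hβ'β
  have hmom' : ∀ Q ∈ Θ, ∀ k, ∫ ω, |ξ k ω| ^ (1 + β') ∂Q ≤ M := by
    intro Q hQ k
    haveI := hprob Q hQ
    have h1 : ∫ ω, |ξ k ω| ^ (1+β') ∂Q ≤ ∫ ω, (1 + |ξ k ω| ^ (1+β)) ∂Q :=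
      integral_mono (hint' Q hQ k) ((integrable_const 1).add (hint Q hQ k))
        (fun ω => rpow_le_one_add_rpow hβ'0.le hβ'β)
    rw [integral_add (integrable_const 1) (hint Q hQ k)] at h1
    simp only [integral_const, measure_univ, ENNReal.toReal_one, probReal_univ, smul_eq_mul, one_mul] at h1
    have h2 := hM₀ Q hQ k
    have h3 : (1:ℝ) + M₀ ≤ M := le_max_left _ _
    linarith
  set η : ℕ → Ω → ℝ := fun k ω => -ξ k ω with hη
  have hmeasη : ∀ k, Measurable (η k) := fun k => (hmeas k).neg
  have hidentη : ∀ k, ∀ φ : ℝ → ℝ, BddLip φ →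
      SLE Θ (fun ω => φ (η k ω)) = SLE Θ (fun ω => φ (η 0 ω)) := ident_neg hiid.1
  have hindepη : ∀ k : ℕ, IndepVec Θ (η (k + 1)) (fun ω (i : Fin (k + 1)) => η i ω) :=
    indep_neg hiid.2
  have hintη : ∀ Q ∈ Θ, ∀ k, Integrable (fun ω => |η k ω| ^ (1 + β')) Q := by
    intro Q hQ k
    have := hint' Q hQ k
    simpa [hη, abs_neg] using this
  have hmomη : ∀ Q ∈ Θ, ∀ k, ∫ ω, |η k ω| ^ (1 + β') ∂Q ≤ M := by
    intro Q hQ k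
    have := hmom' Q hQ k
    simpa [hη, abs_neg] using this
  have hup : ∀ m : ℕ, ∀ᵐ ω ∂P, ∀ᶠ n : ℕ in atTop,
      (∑ i ∈ Finset.range n, ξ i ω) / n ≤ SLE Θ (fun ω' => ξ 0 ω') + 1/((m:ℝ)+1) :=
    fun m => key_upper hprob hmeas hiid.1 hiid.2 hβ'0 hβ'1 hM1 hint' hmom' hP (by positivity)
  have hlow : ∀ m : ℕ, ∀ᵐ ω ∂P, ∀ᶠ n : ℕ in atTop,
      (∑ i ∈ Finset.range n, η i ω) / n ≤ SLE Θ (fun ω' => η 0 ω') + 1/((m:ℝ)+1) :=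
    fun m => key_upper hprob hmeasη hidentη hindepη hβ'0 hβ'1 hM1 hintη hmomη hP (by positivity)
  filter_upwards [ae_all_iff.2 hup, ae_all_iff.2 hlow] with ω hu hl
  set u : ℕ → EReal := fun n => (((∑ i ∈ Finset.range n, ξ i ω) / n : ℝ) : EReal) with hu_def
  have hupper : Filter.limsup u atTop ≤ ((SLE Θ (fun ω' => ξ 0 ω') : ℝ) : EReal) := by
    have hstep : ∀ m : ℕ, Filter.limsup u atTop ≤
        (((SLE Θ (fun ω' => ξ 0 ω') + 1/((m:ℝ)+1) : ℝ)) : EReal) := by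
      intro m
      have hev : ∀ᶠ n : ℕ in atTop, u n ≤
          (((SLE Θ (fun ω' => ξ 0 ω') + 1/((m:ℝ)+1) : ℝ)) : EReal) :=
        (hu m).mono (fun n hn => EReal.coe_le_coe_iff.2 hn)
      calc Filter.limsup u atTop ≤
          Filter.limsup (fun _ : ℕ =>
            (((SLE Θ (fun ω' => ξ 0 ω') + 1/((m:ℝ)+1) : ℝ)) : EReal)) atTop :=
            limsup_le_limsup hev
      _ = _ := limsup_const (f := (atTop : Filter ℕ)) _
    refine ge_of_tendsto (x := (atTop : Filter ℕ)) ?_ (Eventually.of_forall hstep)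
    rw [EReal.tendsto_coe]
    have h0 := tendsto_one_div_add_atTop_nhds_zero_nat (𝕜 := ℝ)
    simpa using (tendsto_const_nhds (x := SLE Θ (fun ω' => ξ 0 ω'))
      (f := (atTop : Filter ℕ))).add h0
  have hlower : ((-SLE Θ (fun ω' => -ξ 0 ω') : ℝ) : EReal) ≤ Filter.liminf u atTop := by
    have hstep : ∀ m : ℕ,
        (((-SLE Θ (fun ω' => -ξ 0 ω') - 1/((m:ℝ)+1) : ℝ)) : EReal) ≤
          Filter.liminf u atTop := by
      intro m
      have hev : ∀ᶠ n : ℕ in atTop,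
          (((-SLE Θ (fun ω' => -ξ 0 ω') - 1/((m:ℝ)+1) : ℝ)) : EReal) ≤ u n := by
        refine (hl m).mono (fun n hn => ?_)
        simp only [hη] at hn
        rw [Finset.sum_neg_distrib, neg_div] at hn
        refine EReal.coe_le_coe_iff.2 ?_
        linarith
      calc (((-SLE Θ (fun ω' => -ξ 0 ω') - 1/((m:ℝ)+1) : ℝ)) : EReal) =
          Filter.liminf (fun _ : ℕ =>
            (((-SLE Θ (fun ω' => -ξ 0 ω') - 1/((m:ℝ)+1) : ℝ)) : EReal)) atTop :=
            (liminf_const (f := (atTop : Filter ℕ)) _).symm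
      _ ≤ Filter.liminf u atTop := liminf_le_liminf hev
    refine le_of_tendsto (x := (atTop : Filter ℕ)) ?_ (Eventually.of_forall hstep)
    rw [EReal.tendsto_coe]
    have h0 := tendsto_one_div_add_atTop_nhds_zero_nat (𝕜 := ℝ)
    simpa using (tendsto_const_nhds (x := -SLE Θ (fun ω' => -ξ 0 ω'))
      (f := (atTop : Filter ℕ))).sub h0
  exact ⟨hlower, liminf_le_limsup, hupper⟩
end

section
/- Let (ξ_k)_{k≥1} be real random variables on (Ω,F) with 𝔼 = sup_{P∈Θ} E_P, let μ̲ ≤ μ̄ be reals, and let κ ∈ {μ̲, μ̄}^ℕ. Set μ_n = (κ_1+⋯+κ_n)/n, N⁺(n) = {i ≤ n : κ_i = μ̄}, N⁻(n) = {i ≤ n : κ_i = μ̲}, and let k_n, l_n be the cardinalities of N⁺(n), N⁻(n). Then for every P ∈ Θ with E_P[ξ_i] = κ_i for all i ≤ n, and every ε > 0 (with the convention 0/0 = 0): P(|ξ̄_n − μ_n| > ε) ≤ (4/ε)(k_n/n)·𝔼[((Σ_{i∈N⁺(n)} ξ_i)/k_n − μ̄)⁺] + (4/ε)(l_n/n)·𝔼[((Σ_{i∈N⁻(n)}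 ξ_i)/l_n − μ̲)⁻]. -/
open MeasureTheory Filter Topology

lemma integral_le_SLE {Ω : Type*} [MeasurableSpace Ω] (Θ : Set (Measure Ω))
    (f : Ω → ℝ) (P : Measure Ω) (hP : P ∈ Θ) (B : ℝ) (hB0 : 0 ≤ B)
    (hbd : ∀ Q ∈ Θ, ∫ ω, f ω ∂Q ≤ B) : ∫ ω, f ω ∂P ≤ SLE Θ f := by
  have hbdd : BddAbove (Set.range fun Q : Measure Ω => ⨆ _ : Q ∈ Θ, ∫ ω, f ω ∂Q) := by
    refine ⟨B, ?_⟩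
    rintro x ⟨Q, rfl⟩
    by_cases hQ : Q ∈ Θ
    · simp only []
      rw [ciSup_pos hQ]; exact hbd Q hQ
    · have : IsEmpty (Q ∈ Θ) := ⟨hQ⟩
      simp only []
      rw [iSup, Set.range_eq_empty, Real.sSup_empty]
      exact hB0
  have h1 : (⨆ _ : P ∈ Θ, ∫ ω, f ω ∂P) ≤ SLE Θ f := by
    rw [ciSup_pos hP]
    exact le_csSup ⟨B, by rintro _ ⟨Q, hQ, rfl⟩; exact hbd Q hQ⟩ ⟨P, hP, rfl⟩
  rw [ciSup_pos hP] at h1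
  exact h1

lemma key {Ω : Type*} [MeasurableSpace Ω] (Θ : Set (Measure Ω)) (hne : Θ.Nonempty)
    (hprob : ∀ Q ∈ Θ, IsProbabilityMeasure Q)
    (ξ : ℕ → Ω → ℝ) (F : Finset ℕ) (c : ℝ)
    (hint : ∀ Q ∈ Θ, ∀ i, Integrable (ξ i) Q)
    (hmom : ∀ i, ∃ M : ℝ, ∀ Q ∈ Θ, ∫ ω, |ξ i ω| ∂Q ≤ M)
    (P : Measure Ω) (hP : P ∈ Θ) (hEP : ∀ i ∈ F, ∫ ω, ξ i ω ∂P = c)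
    (nR : ℝ) (hnR : 0 < nR) :
    ∫ ω, |((F.card : ℝ)/nR) * ((∑ i ∈ F, ξ i ω)/(F.card : ℝ) - c)| ∂P ≤
      4 * (((F.card : ℝ)/nR) * SLE Θ (fun ω => max ((∑ i ∈ F, ξ i ω)/(F.card : ℝ) - c) 0)) := by
  haveI := hprob P hP
  by_cases hF : (F.card : ℝ) = 0
  · simp [hF]
  have hk : (0:ℝ) < (F.card : ℝ) :=
    lt_of_le_of_ne (Nat.cast_nonneg _) (Ne.symm hF)
  set Z : Ω → ℝ := fun ω => (∑ i ∈ F, ξ i ω)/(F.card : ℝ) - c with hZdef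
  have hZint : ∀ Q ∈ Θ, Integrable Z Q := by
    intro Q hQ
    haveI := hprob Q hQ
    exact ((integrable_finset_sum F fun i _ => hint Q hQ i).div_const _).sub (integrable_const c)
  have hmean : ∫ ω, Z ω ∂P = 0 := by
    rw [hZdef]
    rw [integral_sub ((integrable_finset_sum F fun i _ => hint P hP i).div_const _)
      (integrable_const c)]
    rw [integral_div, integral_finset_sum F fun i _ => hint P hP i]
    rw [Finset.sum_congr rfl hEP, Finset.sum_const, nsmul_eq_mul, integral_const]
    simp
    field_simp
    ring
  have habs : ∫ ω, |Z ω| ∂P = 2 * ∫ ω, max (Z ω) 0 ∂P := by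
    have hpt : ∀ ω, |Z ω| = 2 * max (Z ω) 0 - Z ω := by
      intro ω
      rcases le_total (Z ω) 0 with h | h
      · rw [abs_of_nonpos h, max_eq_right h]; ring
      · rw [abs_of_nonneg h, max_eq_left h]; ring
    simp only [hpt]
    rw [integral_sub (((hZint P hP).pos_part).const_mul 2) (hZint P hP),
      integral_const_mul, hmean]
    ring
  -- SLE bound
  choose M hM using hmom
  obtain ⟨Q₀, hQ₀⟩ := hne
  have hMnn : ∀ i, 0 ≤ M i := fun i =>
    le_trans (integral_nonneg fun ω => abs_nonneg _) (hM i Q₀ hQ₀)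
  set B : ℝ := (∑ i ∈ F, M i)/(F.card : ℝ) + |c| with hBdef
  have hB0 : 0 ≤ B :=
    add_nonneg (div_nonneg (Finset.sum_nonneg fun i _ => hMnn i) hk.le) (abs_nonneg c)
  have hbd : ∀ Q ∈ Θ, ∫ ω, max (Z ω) 0 ∂Q ≤ B := by
    intro Q hQ
    haveI := hprob Q hQ
    have hmaj : ∀ ω, max (Z ω) 0 ≤ (∑ i ∈ F, |ξ i ω|)/(F.card : ℝ) + |c| := by
      intro ω
      have h1 : max (Z ω) 0 ≤ |Z ω| := max_le (le_abs_self _) (abs_nonneg _)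
      have h2 : |Z ω| ≤ |∑ i ∈ F, ξ i ω|/(F.card : ℝ) + |c| := by
        rw [hZdef]
        calc |(∑ i ∈ F, ξ i ω)/(F.card : ℝ) - c|
            ≤ |(∑ i ∈ F, ξ i ω)/(F.card : ℝ)| + |c| := abs_sub _ _
          _ = |∑ i ∈ F, ξ i ω|/(F.card : ℝ) + |c| := by
              rw [abs_div, abs_of_pos hk]
      have h3 : |∑ i ∈ F, ξ i ω| ≤ ∑ i ∈ F, |ξ i ω| := Finset.abs_sum_le_sum_abs _ _
      calc max (Z ω) 0 ≤ |∑ i ∈ F, ξ i ω|/(F.card : ℝ) + |c| := h1.trans h2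
        _ ≤ (∑ i ∈ F, |ξ i ω|)/(F.card : ℝ) + |c| := by gcongr
    calc ∫ ω, max (Z ω) 0 ∂Q
        ≤ ∫ ω, ((∑ i ∈ F, |ξ i ω|)/(F.card : ℝ) + |c|) ∂Q := by
          refine integral_mono (hZint Q hQ).pos_part ?_ hmaj
          exact ((integrable_finset_sum F fun i _ => (hint Q hQ i).abs).div_const _).add
            (integrable_const _)
      _ = (∑ i ∈ F, ∫ ω, |ξ i ω| ∂Q)/(F.card : ℝ) + |c| := by
          rw [integral_add ((integrable_finset_sum F fun i _ => (hint Q hQ i).abs).div_const _)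
            (integrable_const _), integral_div,
            integral_finset_sum F fun i _ => (hint Q hQ i).abs, integral_const]
          simp
      _ ≤ B := by rw [hBdef]; gcongr; exact hM _ Q hQ
  have hSLE : ∫ ω, max (Z ω) 0 ∂P ≤ SLE Θ (fun ω => max (Z ω) 0) :=
    integral_le_SLE Θ _ P hP B hB0 hbd
  have hSLE0 : 0 ≤ SLE Θ (fun ω => max (Z ω) 0) :=
    le_trans (integral_nonneg fun ω => le_max_right _ _) hSLE
  have hpull : ∫ ω, |((F.card : ℝ)/nR) * Z ω| ∂P = ((F.card : ℝ)/nR) * ∫ ω, |Z ω| ∂P := by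
    simp only [abs_mul, abs_of_nonneg (div_nonneg hk.le hnR.le)]
    exact integral_const_mul _ _
  have hq : (0:ℝ) ≤ (F.card : ℝ)/nR := div_nonneg hk.le hnR.le
  calc ∫ ω, |((F.card : ℝ)/nR) * Z ω| ∂P
      = ((F.card : ℝ)/nR) * (2 * ∫ ω, max (Z ω) 0 ∂P) := by rw [hpull, habs]
    _ ≤ ((F.card : ℝ)/nR) * (2 * SLE Θ (fun ω => max (Z ω) 0)) := by gcongr
    _ ≤ 4 * (((F.card : ℝ)/nR) * SLE Θ (fun ω => max (Z ω) 0)) := by nlinarith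

/-- Lemma `lemma-LLN-esti`: a Chebyshev-type estimate for
`P(|ξ̄_n − μ_n| > ε)` for `P ∈ Θ` with `E_P[ξ_i] = κ_i`, where `κ ∈ {μ̲, μ̄}^ℕ`,
`μ_n = (κ_1 + ⋯ + κ_n)/n`, `N⁺(n) = {i ≤ n : κ_i = μ̄}`, `N⁻(n) = {i ≤ n : κ_i = μ̲}`,
with cardinalities `k_n`, `l_n` (and the convention `0/0 = 0`, automatic in Lean). -/
theorem stmt1 {Ω : Type*} [MeasurableSpace Ω] (Θ : Set (Measure Ω)) (hne : Θ.Nonempty)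
    (hprob : ∀ P ∈ Θ, IsProbabilityMeasure P)
    (ξ : ℕ → Ω → ℝ) (hmeas : ∀ i, Measurable (ξ i))
    (a b : ℝ) (hab : a ≤ b)
    (κ : ℕ → ℝ) (hκ : ∀ i, κ i = a ∨ κ i = b)
    (n : ℕ) (hn : 1 ≤ n)
    (hint : ∀ Q ∈ Θ, ∀ i, Integrable (ξ i) Q)
    (hmom : ∀ i, ∃ M : ℝ, ∀ Q ∈ Θ, ∫ ω, |ξ i ω| ∂Q ≤ M)
    (P : Measure Ω) (hP : P ∈ Θ)
    (hEP : ∀ i < n, ∫ ω, ξ i ω ∂P = κ i)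
    (ε : ℝ) (hε : 0 < ε) :
    (P {ω | ε < |(∑ i ∈ Finset.range n, ξ i ω) / n - (∑ i ∈ Finset.range n, κ i) / n|}).toReal ≤
      4 / ε * (((((Finset.range n).filter fun i => κ i = b).card : ℝ) / n) *
          SLE Θ (fun ω =>
            max ((∑ i ∈ (Finset.range n).filter fun i => κ i = b, ξ i ω) /
                ((((Finset.range n).filter fun i => κ i = b).card : ℝ)) - b) 0))
      + 4 / ε * (((((Finset.range n).filter fun i => κ i = a).card : ℝ) / n) *
          SLE Θ (fun ω =>
            max (-((∑ i ∈ (Finset.range n).filter fun i => κ i = a, ξ i ω) /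
                ((((Finset.range n).filter fun i => κ i = a).card : ℝ)) - a)) 0)) := by
  classical
  haveI := hprob P hP
  have hnpos : (0:ℝ) < (n : ℝ) := by exact_mod_cast hn
  set K := (Finset.range n).filter fun i => κ i = b with hKdef
  set L := (Finset.range n).filter fun i => κ i = a with hLdef
  set X : Ω → ℝ := fun ω => ((K.card : ℝ)/(n:ℝ)) * ((∑ i ∈ K, ξ i ω)/(K.card : ℝ) - b) with hXdef
  set Y : Ω → ℝ := fun ω => ((L.card : ℝ)/(n:ℝ)) * ((∑ i ∈ L, ξ i ω)/(L.card : ℝ) - a) with hYdef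
  -- rewrite X, Y as sums over n
  have hXsum : ∀ ω, X ω = (∑ i ∈ K, (ξ i ω - b)) / n := by
    intro ω
    rw [hXdef]
    by_cases hk : (K.card : ℝ) = 0
    · have : K = ∅ := Finset.card_eq_zero.mp (by exact_mod_cast hk)
      simp [this]
    · rw [Finset.sum_sub_distrib, Finset.sum_const, nsmul_eq_mul]
      field_simp
  have hYsum : ∀ ω, Y ω = (∑ i ∈ L, (ξ i ω - a)) / n := by
    intro ω
    rw [hYdef]
    by_cases hl : (L.card : ℝ) = 0
    · have : L = ∅ := Finset.card_eq_zero.mp (by exact_mod_cast hl)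
      simp [this]
    · rw [Finset.sum_sub_distrib, Finset.sum_const, nsmul_eq_mul]
      field_simp
  -- pointwise claim
  have hclaim : ∀ ω,
      |(∑ i ∈ Finset.range n, ξ i ω) / n - (∑ i ∈ Finset.range n, κ i) / n| ≤ |X ω| + |Y ω| := by
    intro ω
    by_cases hab' : a = b
    · have hκa : ∀ i, κ i = b := fun i => (hκ i).elim (fun h => h.trans hab') id
      have hKall : K = Finset.range n := by
        rw [hKdef]; exact Finset.filter_true_of_mem fun i _ => hκa i
      have : (∑ i ∈ Finset.range n, ξ i ω) / n - (∑ i ∈ Finset.range n, κ i) / n = X ω := by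
        rw [hXsum, hKall, Finset.sum_sub_distrib, Finset.sum_const, nsmul_eq_mul,
          Finset.sum_congr rfl fun i _ => hκa i, Finset.sum_const, nsmul_eq_mul]
        field_simp
      rw [this]
      exact le_add_of_nonneg_right (abs_nonneg _) |>.trans_eq' rfl
    · have hLnot : (Finset.range n).filter (fun i => ¬ κ i = b) = L := by
        rw [hLdef]
        apply Finset.filter_congr
        intro i _
        rcases hκ i with h | h <;> simp [h, hab', Ne.symm hab']
      have hsplit : ∑ i ∈ Finset.range n, (ξ i ω - κ i)
          = ∑ i ∈ K, (ξ i ω - b) + ∑ i ∈ L, (ξ i ω - a) := by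
        rw [← Finset.sum_filter_add_sum_filter_not (Finset.range n) (fun i => κ i = b)]
        congr 1
        · refine Finset.sum_congr rfl fun i hi => ?_
          have h2 : κ i = b := (Finset.mem_filter.mp hi).2
          rw [h2]
        · rw [hLnot]
          refine Finset.sum_congr rfl fun i hi => ?_
          have h2 : κ i = a := (Finset.mem_filter.mp hi).2
          rw [h2]
      have heq : (∑ i ∈ Finset.range n, ξ i ω) / n - (∑ i ∈ Finset.range n, κ i) / n
          = X ω + Y ω := by
        rw [hXsum, hYsum, ← add_div, ← hsplit, Finset.sum_sub_distrib, sub_div]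
      rw [heq]
      exact abs_add_le _ _
  -- integrability
  have hXint : Integrable X P := by
    rw [hXdef]
    exact (((integrable_finset_sum K fun i _ => hint P hP i).div_const _).sub
      (integrable_const b)).const_mul _
  have hYint : Integrable Y P := by
    rw [hYdef]
    exact (((integrable_finset_sum L fun i _ => hint P hP i).div_const _).sub
      (integrable_const a)).const_mul _
  have hWint : Integrable (fun ω => |X ω| + |Y ω|) P := hXint.abs.add hYint.abs
  -- Markov
  have hsub : {ω | ε < |(∑ i ∈ Finset.range n, ξ i ω) / n - (∑ i ∈ Finset.range n, κ i) / n|}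
      ⊆ {ω | ε ≤ |X ω| + |Y ω|} := fun ω h => le_trans (le_of_lt h) (hclaim ω)
  have hmarkov := mul_meas_ge_le_integral_of_nonneg
    (μ := P) (f := fun ω => |X ω| + |Y ω|)
    (ae_of_all _ fun ω => add_nonneg (abs_nonneg _) (abs_nonneg _)) hWint ε
  have hmono : (P {ω | ε < |(∑ i ∈ Finset.range n, ξ i ω) / n
        - (∑ i ∈ Finset.range n, κ i) / n|}).toReal
      ≤ (P {ω | ε ≤ |X ω| + |Y ω|}).toReal :=
    ENNReal.toReal_mono (measure_ne_top P _) (measure_mono hsub)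
  -- bounds on the two integrals
  have hEPK : ∀ i ∈ K, ∫ ω, ξ i ω ∂P = b := by
    intro i hi
    obtain ⟨hir, hib⟩ := Finset.mem_filter.mp (hKdef ▸ hi)
    rw [hEP i (Finset.mem_range.mp hir), hib]
  have hEPL : ∀ i ∈ L, ∫ ω, (fun ω' => -ξ i ω') ω ∂P = -a := by
    intro i hi
    obtain ⟨hir, hia⟩ := Finset.mem_filter.mp (hLdef ▸ hi)
    rw [integral_neg, hEP i (Finset.mem_range.mp hir), hia]
  have hbX := key Θ hne hprob ξ K b hint hmom P hP hEPK (n : ℝ) hnpos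
  have hbY := key Θ hne hprob (fun i ω => -ξ i ω) L (-a)
    (fun Q hQ i => (hint Q hQ i).neg)
    (fun i => ⟨(hmom i).choose, fun Q hQ => by
      simpa [abs_neg] using (hmom i).choose_spec Q hQ⟩)
    P hP hEPL (n : ℝ) hnpos
  -- convert hbY
  have e1 : ∀ ω, (∑ i ∈ L, -ξ i ω)/(L.card : ℝ) - (-a)
      = -((∑ i ∈ L, ξ i ω)/(L.card : ℝ) - a) := by
    intro ω
    rw [Finset.sum_neg_distrib, neg_div]
    ring
  have hbY' : ∫ ω, |Y ω| ∂P ≤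
      4 * (((L.card : ℝ)/(n:ℝ)) * SLE Θ (fun ω =>
        max (-((∑ i ∈ L, ξ i ω)/(L.card : ℝ) - a)) 0)) := by
    have e2 : (fun ω => max ((∑ i ∈ L, -ξ i ω)/(L.card : ℝ) - (-a)) 0)
        = fun ω => max (-((∑ i ∈ L, ξ i ω)/(L.card : ℝ) - a)) 0 := by
      funext ω; rw [e1]
    have e3 : ∀ ω, |((L.card : ℝ)/(n:ℝ)) * ((∑ i ∈ L, -ξ i ω)/(L.card : ℝ) - (-a))| = |Y ω| := by
      intro ω
      rw [e1, hYdef, mul_neg, abs_neg]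
    calc ∫ ω, |Y ω| ∂P
        = ∫ ω, |((L.card : ℝ)/(n:ℝ)) * ((∑ i ∈ L, -ξ i ω)/(L.card : ℝ) - (-a))| ∂P := by
          exact integral_congr_ae (ae_of_all _ fun ω => (e3 ω).symm)
      _ ≤ _ := hbY
      _ = _ := by rw [e2]
  -- combine
  have hXY : ∫ ω, (|X ω| + |Y ω|) ∂P = ∫ ω, |X ω| ∂P + ∫ ω, |Y ω| ∂P :=
    integral_add hXint.abs hYint.abs
  set A := SLE Θ (fun ω => max ((∑ i ∈ K, ξ i ω)/(K.card : ℝ) - b) 0) with hAdef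
  set Bq := SLE Θ (fun ω => max (-((∑ i ∈ L, ξ i ω)/(L.card : ℝ) - a)) 0) with hBqdef
  have hfin : (P {ω | ε < |(∑ i ∈ Finset.range n, ξ i ω) / n
        - (∑ i ∈ Finset.range n, κ i) / n|}).toReal
      ≤ (4 * (((K.card : ℝ)/(n:ℝ)) * A) + 4 * (((L.card : ℝ)/(n:ℝ)) * Bq)) / ε := by
    rw [le_div_iff₀ hε]
    calc (P {ω | ε < |(∑ i ∈ Finset.range n, ξ i ω) / n
          - (∑ i ∈ Finset.range n, κ i) / n|}).toReal * ε
        = ε * (P {ω | ε < |(∑ i ∈ Finset.range n, ξ i ω) / n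
          - (∑ i ∈ Finset.range n, κ i) / n|}).toReal := mul_comm _ _
      _ ≤ ε * (P {ω | ε ≤ |X ω| + |Y ω|}).toReal := by
          exact mul_le_mul_of_nonneg_left hmono hε.le
      _ ≤ ∫ ω, (|X ω| + |Y ω|) ∂P := hmarkov
      _ = ∫ ω, |X ω| ∂P + ∫ ω, |Y ω| ∂P := hXY
      _ ≤ 4 * (((K.card : ℝ)/(n:ℝ)) * A) + 4 * (((L.card : ℝ)/(n:ℝ)) * Bq) :=
          add_le_add hbX hbY'
  calc _ ≤ (4 * (((K.card : ℝ)/(n:ℝ)) * A) + 4 * (((L.card : ℝ)/(n:ℝ)) * Bq)) / ε := hfin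
    _ = 4 / ε * (((K.card : ℝ)/(n:ℝ)) * A) + 4 / ε * (((L.card : ℝ)/(n:ℝ)) * Bq) := by
        ring
end

section
/- Let μ̲ ≤ μ ≤ μ̄ be real numbers. Define κ_1(μ) = μ̄ if μ ≥ (μ̄+μ̲)/2 and κ_1(μ) = μ̲ otherwise, and recursively κ_{n+1}(μ) = μ̄ if μ ≥ μ_n and κ_{n+1}(μ) = μ̲ otherwise, where μ_n = (κ_1(μ)+⋯+κ_n(μ))/n. Then for every n ≥ 1, |μ_n − μ| ≤ (μ̄ − μ̲)/n. Equivalently, if k_n and l_n are the numbers of indices i ≤ n with κ_i(μ) = μ̄ and κ_i(μ) = μ̲ respectively, then |k_n/n − (μ−μ̲)/(μ̄−μ̲)| ≤ 1/n and |l_n/n − (μ̄−μ)/(μ̄−μ̲)| ≤ 1/n (when μ̄ > μ̲). -/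
open Finset

/-- `kappaSum a b μ n = κ_1(μ) + ⋯ + κ_n(μ)`, where `κ` is the recursively defined
sequence with values in `{a, b}` (`a = μ̲`, `b = μ̄`). -/
noncomputable def kappaSum (a b μ : ℝ) : ℕ → ℝ
  | 0 => 0
  | n + 1 => kappaSum a b μ n +
      (if n = 0 then (if (a + b) / 2 ≤ μ then b else a)
       else (if kappaSum a b μ n / (n : ℝ) ≤ μ then b else a))

/-- `kappa a b μ n = κ_{n+1}(μ)` (0-indexed): `κ_1(μ) = b` if `μ ≥ (a+b)/2` else `a`,
and `κ_{n+1}(μ) = b` if `μ ≥ μ_n = (κ_1 + ⋯ + κ_n)/n` else `a`. -/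
noncomputable def kappa (a b μ : ℝ) (n : ℕ) : ℝ := kappaSum a b μ (n + 1) - kappaSum a b μ n

lemma kappa_mem (a b μ : ℝ) (n : ℕ) : kappa a b μ n = a ∨ kappa a b μ n = b := by
  unfold kappa
  rw [show kappaSum a b μ (n+1) = kappaSum a b μ n +
      (if n = 0 then (if (a + b) / 2 ≤ μ then b else a)
       else (if kappaSum a b μ n / (n : ℝ) ≤ μ then b else a)) from rfl]
  split_ifs <;> simp

lemma sum_kappa (a b μ : ℝ) (n : ℕ) :
    ∑ i ∈ Finset.range n, kappa a b μ i = kappaSum a b μ n := by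
  have := Finset.sum_range_sub (f := kappaSum a b μ) n
  simpa [kappa, kappaSum] using this

lemma key_s2 (a b μ : ℝ) (ha : a ≤ μ) (hb : μ ≤ b) :
    ∀ n : ℕ, 1 ≤ n → |kappaSum a b μ n - n * μ| ≤ b - a := by
  intro n hn
  induction n with
  | zero => omega
  | succ m ih =>
    rcases Nat.eq_or_lt_of_le hn with h1 | h1
    · -- m = 0
      have hm : m = 0 := by omega
      subst hm
      simp only [kappaSum]
      rw [abs_le]
      split_ifs with h <;> push_cast <;> constructor <;> nlinarith
    · have hm : 1 ≤ m := by omega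
      have ihm := ih hm
      rw [show kappaSum a b μ (m+1) = kappaSum a b μ m +
        (if m = 0 then (if (a + b) / 2 ≤ μ then b else a)
         else (if kappaSum a b μ m / (m : ℝ) ≤ μ then b else a)) from rfl]
      have hmz : m ≠ 0 := by omega
      rw [if_neg hmz]
      have hmpos : (0:ℝ) < m := by positivity
      rw [abs_le] at ihm ⊢
      split_ifs with h
      · rw [div_le_iff₀ hmpos] at h
        push_cast
        constructor <;> nlinarith
      · push_neg at h
        rw [lt_div_iff₀ hmpos] at h
        push_cast
        constructor <;> nlinarith

/-- for `a = μ̲ ≤ μ ≤ μ̄ = b` and the recursively defined sequence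
`κ_n(μ) ∈ {a, b}` with running averages `μ_n`, we have `|μ_n − μ| ≤ (b − a)/n` for all
`n ≥ 1`; equivalently (when `a < b`), with `k_n = #{i ≤ n : κ_i(μ) = b}` and
`l_n = #{i ≤ n : κ_i(μ) = a}`, `|k_n/n − (μ−a)/(b−a)| ≤ 1/n` and
`|l_n/n − (b−μ)/(b−a)| ≤ 1/n`. -/
theorem stmt2 (a b μ : ℝ) (hab : a ≤ b) (hμ : μ ∈ Set.Icc a b) :
    (∀ n : ℕ, 1 ≤ n →
      |(∑ i ∈ Finset.range n, kappa a b μ i) / n - μ| ≤ (b - a) / n) ∧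
    (a < b → ∀ n : ℕ, 1 ≤ n →
      |((((Finset.range n).filter fun i => kappa a b μ i = b).card : ℝ)) / n -
          (μ - a) / (b - a)| ≤ 1 / n ∧
      |((((Finset.range n).filter fun i => kappa a b μ i = a).card : ℝ)) / n -
          (b - μ) / (b - a)| ≤ 1 / n) := by

  obtain ⟨ha, hb⟩ := hμ
  have main : ∀ n : ℕ, 1 ≤ n →
      |(∑ i ∈ Finset.range n, kappa a b μ i) / n - μ| ≤ (b - a) / n := by
    intro n hn
    have hnpos : (0:ℝ) < n := by positivity
    have := key_s2 a b μ ha hb n hn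
    rw [sum_kappa]
    rw [show kappaSum a b μ n / n - μ = (kappaSum a b μ n - n * μ) / n by field_simp]
    rw [abs_div, abs_of_pos hnpos]
    exact div_le_div_of_nonneg_right this hnpos.le
  refine ⟨main, fun hlt n hn => ?_⟩
  have hnpos : (0:ℝ) < n := by positivity
  have hba : (0:ℝ) < b - a := by linarith
  set k := ((Finset.range n).filter fun i => kappa a b μ i = b).card with hk
  set l := ((Finset.range n).filter fun i => kappa a b μ i = a).card with hl
  have hfilter : ((Finset.range n).filter fun i => kappa a b μ i = a) =
      ((Finset.range n).filter fun i => ¬ kappa a b μ i = b) := by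
    apply Finset.filter_congr
    intro i _
    rcases kappa_mem a b μ i with h | h <;> simp [h, hlt.ne, hlt.ne']
  have hkl : (k : ℝ) + l = n := by
    have := Finset.card_filter_add_card_filter_not
      (s := Finset.range n) (p := fun i => kappa a b μ i = b)
    have h2 : k + l = n := by rw [hk, hl, hfilter]; simpa using this
    exact_mod_cast h2
  have hsum : ∑ i ∈ Finset.range n, kappa a b μ i = k * b + l * a := by
    rw [← Finset.sum_filter_add_sum_filter_not (Finset.range n)
      (fun i => kappa a b μ i = b)]
    congr 1
    · rw [Finset.sum_congr rfl (fun i hi => (Finset.mem_filter.mp hi).2)]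
      simp [hk, mul_comm]
    · rw [← hfilter, Finset.sum_congr rfl (fun i hi => (Finset.mem_filter.mp hi).2)]
      simp [hl, hfilter, mul_comm]
  have hmain := main n hn
  constructor
  · have heq : (k:ℝ) / n - (μ - a) / (b - a) =
        ((∑ i ∈ Finset.range n, kappa a b μ i) / n - μ) / (b - a) := by
      rw [hsum]
      field_simp
      first
        | linear_combination a * hkl | linear_combination (-a) * hkl
        | linear_combination (a*(b-a)) * hkl | linear_combination (-(a*(b-a))) * hkl
    rw [heq, abs_div, abs_of_pos hba, div_le_iff₀ hba]
    calc |(∑ i ∈ Finset.range n, kappa a b μ i) / n - μ| ≤ (b-a)/n := hmain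
      _ = 1/n * (b-a) := by ring
  · have heq : (l:ℝ) / n - (b - μ) / (b - a) =
        -(((∑ i ∈ Finset.range n, kappa a b μ i) / n - μ) / (b - a)) := by
      rw [hsum]
      field_simp
      first
        | linear_combination b * hkl | linear_combination (-b) * hkl
        | linear_combination (b*(b-a)) * hkl | linear_combination (-(b*(b-a))) * hkl
    rw [heq, abs_neg, abs_div, abs_of_pos hba, div_le_iff₀ hba]
    calc |(∑ i ∈ Finset.range n, kappa a b μ i) / n - μ| ≤ (b-a)/n := hmain
      _ = 1/n * (b-a) := by ring
end

section
/- Let Ω = ℝ^ℕ with coordinate process ξ_k(ω) = ω(k), and let ⃖𝔼 be a regular sublinear expectation on C_b(Ω) under which (ξ_k) is <i.i.d. Let ⃖Θ = {P Borel probability : E_P[X] ≤ ⃖𝔼[X] for all X ∈ C_b(Ω)}. Then ⃖Θ equals the set of P ∈ ⃖Θ such that for all n, m ∈ ℕ, every bounded Lipschitz φ_n : ℝ^n → ℝ and every nonnegative bounded Lipschitz ψ_m : ℝ^m → ℝ: E_P[φ_n(ξ_1,…,ξ_n)·ψ_m(ξ_{n+1},…,ξ_{n+m})] ≤ ⃖𝔼[φ_n(ξ_1,…,ξ_n)]·E_P[ψ_m(ξ_{n+1},…,ξ_{n+m})].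 -/
open MeasureTheory Filter Topology

/-- The canonical space `Ω = ℝ^ℕ` of real sequences, with the product (Polish) topology
and its Borel σ-algebra; the canonical process is `ξ_k(ω) = ω(k)`. -/
abbrev RSeq : Type := ℕ → ℝ

/-- Bounded continuous real functions on `RSeq`, i.e. elements of `C_b(Ω)`. -/
def Cb (X : RSeq → ℝ) : Prop := Continuous X ∧ ∃ C, ∀ ω, |X ω| ≤ C

/-- A sublinear expectation on `C_b(Ω)`: monotone, constant-preserving, subadditive,
positively homogeneous, and translation invariant on bounded continuous functions. -/
structure SubLinExp where
  E : (RSeq → ℝ) → ℝ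
  mono : ∀ X Y : RSeq → ℝ, Cb X → Cb Y → (∀ ω, X ω ≤ Y ω) → E X ≤ E Y
  subadd : ∀ X Y : RSeq → ℝ, Cb X → Cb Y → E (fun ω => X ω + Y ω) ≤ E X + E Y
  poshom : ∀ (X : RSeq → ℝ) (c : ℝ), Cb X → 0 ≤ c → E (fun ω => c * X ω) = c * E X
  cadd : ∀ (X : RSeq → ℝ) (c : ℝ), Cb X → E (fun ω => X ω + c) = E X + c
  const : ∀ c : ℝ, E (fun _ => c) = c

/-- Regularity of a sublinear expectation: `X_n ∈ C_b(Ω)`, `X_n ↓ 0` pointwise implies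
`𝔼[X_n] ↓ 0`. -/
def Regular (𝔼 : SubLinExp) : Prop :=
  ∀ X : ℕ → RSeq → ℝ, (∀ n, Cb (X n)) → (∀ ω, Antitone fun n => X n ω) →
    (∀ ω, Tendsto (fun n => X n ω) atTop (𝓝 0)) →
    Tendsto (fun n => 𝔼.E (X n)) atTop (𝓝 0)

/-- The maximal set representing `𝔼`:
`Θ = {P : E_P[X] ≤ 𝔼[X] for all X ∈ C_b(Ω)}`. -/
def maxRep (𝔼 : SubLinExp) : Set (ProbabilityMeasure RSeq) :=
  {P | ∀ X : RSeq → ℝ, Cb X → ∫ ω, X ω ∂(P : Measure RSeq) ≤ 𝔼.E X}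

/-- The canonical process `(ξ_k)` is i.i.d. under `𝔼`: `ξ_{k+1}` is identically
distributed with `ξ_1` and independent of `(ξ_1, …, ξ_k)`, independence being defined
through bounded Lipschitz test functions. -/
def CoordIID (𝔼 : SubLinExp) : Prop :=
  (∀ k : ℕ, ∀ φ : ℝ → ℝ, BddLip φ →
    𝔼.E (fun ω => φ (ω k)) = 𝔼.E (fun ω => φ (ω 0))) ∧
  (∀ k : ℕ, ∀ φ : (Fin (k + 1) → ℝ) × ℝ → ℝ, BddLip φ →
    𝔼.E (fun ω => φ (fun i : Fin (k + 1) => ω i, ω (k + 1))) =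
      𝔼.E (fun ω => 𝔼.E (fun ω' => φ (fun i : Fin (k + 1) => ω i, ω' (k + 1)))))

/-- `ξ_k ∈ L^γ_𝔼` for all `k`: `𝔼[|ξ_k|^γ] < ∞` (uniform moment bound over the maximal
representing set, with integrability) and uniform integrability of `ξ_k` w.r.t. `Θ`. -/
def LgammaCond (𝔼 : SubLinExp) (γ : ℝ) : Prop :=
  (∀ k : ℕ, ∀ P ∈ maxRep 𝔼, Integrable (fun ω : RSeq => |ω k| ^ γ) (P : Measure RSeq)) ∧
  (∀ k : ℕ, ∃ M : ℝ, ∀ P ∈ maxRep 𝔼, ∫ ω, |ω k| ^ γ ∂(P : Measure RSeq) ≤ M) ∧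
  (∀ k : ℕ, Tendsto (fun N : ℕ =>
      ⨆ P ∈ maxRep 𝔼, ∫ ω in {ω : RSeq | (N : ℝ) < |ω k|}, |ω k| ∂(P : Measure RSeq))
    atTop (𝓝 0))

/-- `μ̄ = 𝔼[ξ_1]` (via the representation of `𝔼` on its maximal representing set). -/
noncomputable def muHi (𝔼 : SubLinExp) : ℝ :=
  ⨆ P ∈ maxRep 𝔼, ∫ ω, ω 0 ∂(P : Measure RSeq)

/-- `μ̲ = −𝔼[−ξ_1]` (via the representation of `𝔼` on its maximal representing set). -/
noncomputable def muLo (𝔼 : SubLinExp) : ℝ :=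
  -⨆ P ∈ maxRep 𝔼, ∫ ω, -ω 0 ∂(P : Measure RSeq)

/-- The σ-algebra `F_d = σ(ξ_1, …, ξ_d)`. -/
def Fd (d : ℕ) : MeasurableSpace RSeq :=
  MeasurableSpace.comap (fun ω : RSeq => fun i : Fin d => ω i) inferInstance

/-- The `n`-shift `θ_n` on `RSeq`. -/
def shift (n : ℕ) (ω : RSeq) : RSeq := fun k => ω (n + k)

/-- `P` is an extreme point of the set `S` of probability measures. -/
def ExtremePt {X : Type*} [MeasurableSpace X] (S : Set (ProbabilityMeasure X))
    (P : ProbabilityMeasure X) : Prop :=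
  P ∈ S ∧ ∀ Q ∈ S, ∀ R ∈ S, ∀ α : ℝ, 0 < α → α < 1 →
    (P : Measure X) =
      ENNReal.ofReal α • (Q : Measure X) + ENNReal.ofReal (1 - α) • (R : Measure X) →
    Q = R

/-- The canonical process `(ξ_k)` is `<`i.i.d. under `𝔼`: for all `k, l`, `ξ_k` is
independent of `(ξ_{k+1}, …, ξ_{k+l})` and `ξ_{k+1}` is identically distributed
with `ξ_k`. -/
def CoordLtIID (𝔼 : SubLinExp) : Prop :=
  (∀ k : ℕ, ∀ φ : ℝ → ℝ, BddLip φ →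
    𝔼.E (fun ω => φ (ω (k + 1))) = 𝔼.E (fun ω => φ (ω k))) ∧
  (∀ k l : ℕ, ∀ φ : (Fin l → ℝ) × ℝ → ℝ, BddLip φ →
    𝔼.E (fun ω => φ (fun j : Fin l => ω (k + 1 + j.val), ω k)) =
      𝔼.E (fun ω => 𝔼.E (fun ω' => φ (fun j : Fin l => ω (k + 1 + j.val), ω' k))))

lemma Cb.bound_nonneg {X : RSeq → ℝ} {C : ℝ} (h : ∀ ω, |X ω| ≤ C) : 0 ≤ C :=
  le_trans (abs_nonneg _) (h fun _ => 0)

lemma Cb.const' (c : ℝ) : Cb (fun _ : RSeq => c) := ⟨continuous_const, |c|, fun _ => le_rfl⟩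

lemma Cb.mul {X Y : RSeq → ℝ} (hX : Cb X) (hY : Cb Y) : Cb fun ω => X ω * Y ω := by
  obtain ⟨hXc, C, hC⟩ := hX; obtain ⟨hYc, D, hD⟩ := hY
  exact ⟨hXc.mul hYc, C * D, fun ω => by
    rw [abs_mul]
    exact mul_le_mul (hC ω) (hD ω) (abs_nonneg _) (Cb.bound_nonneg hC)⟩

lemma Cb.sub_const {X : RSeq → ℝ} (hX : Cb X) (c : ℝ) : Cb fun ω => X ω - c := by
  obtain ⟨hXc, C, hC⟩ := hX
  exact ⟨hXc.sub continuous_const, C + |c|, fun ω =>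
    (abs_sub _ _).trans (add_le_add (hC ω) le_rfl)⟩

lemma Cb.sub {X Y : RSeq → ℝ} (hX : Cb X) (hY : Cb Y) : Cb fun ω => X ω - Y ω := by
  obtain ⟨hXc, C, hC⟩ := hX; obtain ⟨hYc, D, hD⟩ := hY
  exact ⟨hXc.sub hYc, C + D, fun ω => (abs_sub _ _).trans (add_le_add (hC ω) (hD ω))⟩

lemma E_le_of_forall_le (𝔼 : SubLinExp) {X : RSeq → ℝ} (hX : Cb X) {c : ℝ}
    (h : ∀ ω, X ω ≤ c) : 𝔼.E X ≤ c := by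
  have := 𝔼.mono X (fun _ => c) hX (Cb.const' c) h
  rwa [𝔼.const] at this

lemma le_E_of_forall_le (𝔼 : SubLinExp) {X : RSeq → ℝ} (hX : Cb X) {c : ℝ}
    (h : ∀ ω, c ≤ X ω) : c ≤ 𝔼.E X := by
  have := 𝔼.mono (fun _ => c) X (Cb.const' c) hX h
  rwa [𝔼.const] at this

lemma abs_E_le (𝔼 : SubLinExp) {X : RSeq → ℝ} (hX : Cb X) {C : ℝ}
    (h : ∀ ω, |X ω| ≤ C) : |𝔼.E X| ≤ C :=
  abs_le.2 ⟨le_E_of_forall_le 𝔼 hX fun ω => neg_le_of_abs_le (h ω),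
    E_le_of_forall_le 𝔼 hX fun ω => le_of_abs_le (h ω)⟩

lemma E_sub_E_le (𝔼 : SubLinExp) {X Y : RSeq → ℝ} (hX : Cb X) (hY : Cb Y) :
    𝔼.E X - 𝔼.E Y ≤ 𝔼.E fun ω => X ω - Y ω := by
  have h := 𝔼.subadd (fun ω => X ω - Y ω) Y (hX.sub hY) hY
  have h2 : (fun ω => (X ω - Y ω) + Y ω) = X := by funext ω; ring
  rw [h2] at h
  linarith
lemma BddLip.mul {E : Type*} [PseudoMetricSpace E] {f g : E → ℝ}
    (hf : BddLip f) (hg : BddLip g) : BddLip fun x => f x * g x := by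
  obtain ⟨⟨C, hC⟩, K, hK⟩ := hf
  obtain ⟨⟨D, hD⟩, L, hL⟩ := hg
  have hC' : ∀ x, |f x| ≤ max C 0 := fun x => (hC x).trans (le_max_left _ _)
  have hD' : ∀ x, |g x| ≤ max D 0 := fun x => (hD x).trans (le_max_left _ _)
  refine ⟨⟨max C 0 * max D 0, fun x => ?_⟩,
    K * (max D 0).toNNReal + (max C 0).toNNReal * L,
    LipschitzWith.of_dist_le_mul fun x y => ?_⟩
  · rw [abs_mul]
    exact mul_le_mul (hC' x) (hD' x) (abs_nonneg _) (le_max_right C 0)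
  · have h1 : f x * g x - f y * g y = f x * (g x - g y) + (f x - f y) * g y := by ring
    have h2 : dist (f x * g x) (f y * g y) ≤ |f x| * |g x - g y| + |f x - f y| * |g y| := by
      rw [Real.dist_eq, h1]
      exact (abs_add_le _ _).trans (by rw [abs_mul, abs_mul])
    have h3 : |g x - g y| ≤ (L : ℝ) * dist x y := by
      have := hL.dist_le_mul x y; rwa [Real.dist_eq] at this
    have h4 : |f x - f y| ≤ (K : ℝ) * dist x y := by
      have := hK.dist_le_mul x y; rwa [Real.dist_eq] at this
    have h5 : |f x| * |g x - g y| ≤ max C 0 * ((L : ℝ) * dist x y) :=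
      mul_le_mul (hC' x) h3 (abs_nonneg _) (le_max_right C 0)
    have h6 : |f x - f y| * |g y| ≤ ((K : ℝ) * dist x y) * max D 0 :=
      mul_le_mul h4 (hD' y) (abs_nonneg _) (by positivity)
    have hcoe : ((K * (max D 0).toNNReal + (max C 0).toNNReal * L : NNReal) : ℝ)
        = (K : ℝ) * max D 0 + max C 0 * (L : ℝ) := by
      push_cast [Real.coe_toNNReal _ (le_max_right D 0), Real.coe_toNNReal _ (le_max_right C 0)]
      ring
    rw [hcoe]
    calc dist (f x * g x) (f y * g y) ≤ |f x| * |g x - g y| + |f x - f y| * |g y| := h2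
      _ ≤ max C 0 * ((L : ℝ) * dist x y) + ((K : ℝ) * dist x y) * max D 0 := add_le_add h5 h6
      _ = ((K : ℝ) * max D 0 + max C 0 * (L : ℝ)) * dist x y := by ring

lemma BddLip.sub_const {E : Type*} [PseudoMetricSpace E] {f : E → ℝ}
    (hf : BddLip f) (c : ℝ) : BddLip fun x => f x - c := by
  obtain ⟨⟨C, hC⟩, K, hK⟩ := hf
  refine ⟨⟨C + |c|, fun x => (abs_sub _ _).trans (add_le_add (hC x) le_rfl)⟩, K,
    LipschitzWith.of_dist_le_mul fun x y => ?_⟩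
  have := hK.dist_le_mul x y
  rwa [Real.dist_eq, show f x - c - (f y - c) = f x - f y by ring, ← Real.dist_eq]

lemma BddLip.compL {E F : Type*} [PseudoMetricSpace E] [PseudoMetricSpace F]
    {φ : F → ℝ} (h : BddLip φ) {T : E → F} (hT : LipschitzWith 1 T) :
    BddLip fun x => φ (T x) := by
  obtain ⟨⟨C, hC⟩, K, hK⟩ := h
  exact ⟨⟨C, fun x => hC (T x)⟩, K * 1, hK.comp hT⟩

lemma dist_cons_le {p : ℕ} (x : ℝ) (y z : Fin p → ℝ) :
    dist (Fin.cons x y) (Fin.cons x z : Fin (p+1) → ℝ) ≤ dist y z := by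
  refine (dist_pi_le_iff dist_nonneg).2 fun i => ?_
  induction i using Fin.cases with
  | zero => simpa using dist_nonneg
  | succ j => simpa using dist_le_pi_dist y z j

lemma cb_cons {p : ℕ} {g : (Fin (p+1) → ℝ) → ℝ} (hg : BddLip g) (k : ℕ) (z : Fin p → ℝ) :
    Cb fun ω : RSeq => g (Fin.cons (ω k) z) := by
  obtain ⟨⟨C, hC⟩, K, hK⟩ := hg
  refine ⟨?_, C, fun ω => hC _⟩
  have hcont : Continuous fun x : ℝ => (Fin.cons x z : Fin (p+1) → ℝ) := by
    apply continuous_pi; intro i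
    induction i using Fin.cases with
    | zero => simp only [Fin.cons_zero]; exact continuous_id
    | succ j => simp only [Fin.cons_succ]; exact continuous_const
  exact hK.continuous.comp (hcont.comp (continuous_apply k))

lemma cb_sel {N : ℕ} {F : (Fin N → ℝ) → ℝ} (hF : BddLip F) (σ : Fin N → ℕ) :
    Cb fun ω : RSeq => F fun i => ω (σ i) := by
  obtain ⟨⟨C, hC⟩, K, hK⟩ := hF
  exact ⟨hK.continuous.comp (continuous_pi fun i => continuous_apply (σ i)), C, fun ω => hC _⟩

/-- peeled function `g' z = 𝔼[g(ω' k, z)]` is bounded Lipschitz. -/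
lemma bddLip_peel (𝔼 : SubLinExp) {p : ℕ} (k : ℕ) {g : (Fin (p+1) → ℝ) → ℝ}
    (hg : BddLip g) :
    BddLip fun z : Fin p → ℝ => 𝔼.E fun ω' => g (Fin.cons (ω' k) z) := by
  obtain ⟨⟨C, hC⟩, K, hK⟩ := hg
  have hg' : BddLip g := ⟨⟨C, hC⟩, K, hK⟩
  constructor
  · exact ⟨C, fun z => abs_E_le 𝔼 (cb_cons hg' k z) fun ω' => hC _⟩
  · refine ⟨K, LipschitzWith.of_dist_le_mul fun y z => ?_⟩
    have key : ∀ y z : Fin p → ℝ,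
        𝔼.E (fun ω' => g (Fin.cons (ω' k) y)) - 𝔼.E (fun ω' => g (Fin.cons (ω' k) z))
          ≤ (K : ℝ) * dist y z := by
      intro y z
      refine le_trans (E_sub_E_le 𝔼 (cb_cons hg' k y) (cb_cons hg' k z)) ?_
      refine E_le_of_forall_le 𝔼 ((cb_cons hg' k y).sub (cb_cons hg' k z)) fun ω => ?_
      have h1 := hK.dist_le_mul (Fin.cons (ω k) y : Fin (p+1) → ℝ) (Fin.cons (ω k) z)
      have h2 := dist_cons_le (ω k) y z
      have h3 : g (Fin.cons (ω k) y) - g (Fin.cons (ω k) z)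
          ≤ dist (g (Fin.cons (ω k) y : Fin (p+1) → ℝ)) (g (Fin.cons (ω k) z)) := by
        rw [Real.dist_eq]; exact le_abs_self _
      calc g (Fin.cons (ω k) y) - g (Fin.cons (ω k) z)
          ≤ (K : ℝ) * dist (Fin.cons (ω k) y : Fin (p+1) → ℝ) (Fin.cons (ω k) z) := h3.trans h1
        _ ≤ (K : ℝ) * dist y z := by
            exact mul_le_mul_of_nonneg_left h2 (by positivity)
    rw [Real.dist_eq, abs_le]
    constructor
    · have := key z y; rw [dist_comm] at this; linarith
    · exact key y z

lemma E_const_mul_sub (𝔼 : SubLinExp) {G : RSeq → ℝ} (hG : Cb G) {a c : ℝ} (ha : 0 ≤ a) :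
    𝔼.E (fun ω => a * (G ω - c)) = a * (𝔼.E G - c) := by
  have h2 : 𝔼.E (fun ω => G ω - c) = 𝔼.E G - c := by
    have := 𝔼.cadd G (-c) hG
    simpa [sub_eq_add_neg] using this
  calc 𝔼.E (fun ω => a * (G ω - c)) = a * 𝔼.E (fun ω => G ω - c) :=
        𝔼.poshom _ a (hG.sub_const c) ha
    _ = a * (𝔼.E G - c) := by rw [h2]

lemma lip_T1 {p m : ℕ} : LipschitzWith 1 (fun q : (Fin (p+m) → ℝ) × ℝ =>
    (Fin.cons q.2 (fun i => q.1 (Fin.castAdd m i)) : Fin (p+1) → ℝ)) := by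
  refine LipschitzWith.of_dist_le_mul fun q r => ?_
  rw [NNReal.coe_one, one_mul]
  refine (dist_pi_le_iff dist_nonneg).2 fun i => ?_
  induction i using Fin.cases with
  | zero => simp only [Fin.cons_zero]; rw [Prod.dist_eq]; exact le_max_right _ _
  | succ j =>
    simp only [Fin.cons_succ]; rw [Prod.dist_eq]
    exact le_trans (dist_le_pi_dist q.1 r.1 _) (le_max_left _ _)

lemma lip_T2 {p m : ℕ} : LipschitzWith 1 (fun q : (Fin (p+m) → ℝ) × ℝ =>
    (fun j : Fin m => q.1 (Fin.natAdd p j))) := by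
  refine LipschitzWith.of_dist_le_mul fun q r => ?_
  rw [NNReal.coe_one, one_mul]
  refine (dist_pi_le_iff dist_nonneg).2 fun j => ?_
  rw [Prod.dist_eq]
  exact le_trans (dist_le_pi_dist q.1 r.1 _) (le_max_left _ _)

lemma lip_T3 {p : ℕ} : LipschitzWith 1 (fun q : (Fin p → ℝ) × ℝ =>
    (Fin.cons q.2 q.1 : Fin (p+1) → ℝ)) := by
  refine LipschitzWith.of_dist_le_mul fun q r => ?_
  rw [NNReal.coe_one, one_mul]
  refine (dist_pi_le_iff dist_nonneg).2 fun i => ?_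
  induction i using Fin.cases with
  | zero => simp only [Fin.cons_zero]; rw [Prod.dist_eq]; exact le_max_right _ _
  | succ j =>
    simp only [Fin.cons_succ]; rw [Prod.dist_eq]
    exact le_trans (dist_le_pi_dist q.1 r.1 _) (le_max_left _ _)

lemma key_s13 (𝔼 : SubLinExp) (hiid : CoordLtIID 𝔼) :
    ∀ (p k m : ℕ) (g : (Fin p → ℝ) → ℝ) (ψ : (Fin m → ℝ) → ℝ) (c : ℝ),
      BddLip g → BddLip ψ → (∀ x, 0 ≤ ψ x) →
      𝔼.E (fun ω => (g (fun i => ω (k + i.val)) - c) * ψ (fun j => ω (k + p + j.val))) =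
      𝔼.E (fun ω => (𝔼.E (fun ω' => g (fun i => ω' (k + i.val))) - c) *
        ψ (fun j => ω (k + p + j.val))) := by
  intro p
  induction p with
  | zero =>
    intro k m g ψ c hg hψ hψ0
    have harg : ∀ ω : RSeq, (fun i : Fin 0 => ω (k + i.val)) = (Fin.elim0 : Fin 0 → ℝ) :=
      fun ω => funext fun i => i.elim0
    simp only [harg, 𝔼.const]
  | succ p IH =>
    intro k m g ψ c hg hψ hψ0
    set g' : (Fin p → ℝ) → ℝ := fun z => 𝔼.E fun ω' => g (Fin.cons (ω' k) z) with hg'def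
    have hg' : BddLip g' := bddLip_peel 𝔼 k hg
    set Φ : (Fin (p + m) → ℝ) × ℝ → ℝ := fun q =>
      (g (Fin.cons q.2 fun i => q.1 (Fin.castAdd m i)) - c) *
        ψ (fun j => q.1 (Fin.natAdd p j)) with hΦdef
    have hΦ : BddLip Φ := BddLip.mul ((hg.compL lip_T1).sub_const c) (hψ.compL lip_T2)
    have hconsω : ∀ (ω : RSeq),
        (Fin.cons (ω k) (fun i : Fin p => ω (k + 1 + i.val)) : Fin (p+1) → ℝ)
          = fun i : Fin (p+1) => ω (k + i.val) := by
      intro ω; funext i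
      induction i using Fin.cases with
      | zero => simp
      | succ j => simp only [Fin.cons_succ, Fin.val_succ]; congr 1; omega
    have hA : (fun ω : RSeq => Φ (fun j : Fin (p+m) => ω (k + 1 + j.val), ω k))
        = fun ω => (g (fun i : Fin (p+1) => ω (k + i.val)) - c) *
            ψ (fun j : Fin m => ω (k + (p+1) + j.val)) := by
      funext ω
      simp only [hΦdef]
      have e1 : (Fin.cons (ω k) (fun i : Fin p => ω (k + 1 + (Fin.castAdd m i).val)) :
          Fin (p+1) → ℝ) = fun i : Fin (p+1) => ω (k + i.val) := by
        funext i
        induction i using Fin.cases with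
        | zero => simp
        | succ j => simp only [Fin.cons_succ, Fin.coe_castAdd, Fin.val_succ]; congr 1; omega
      have e2 : (fun j : Fin m => ω (k + 1 + (Fin.natAdd p j).val))
          = fun j : Fin m => ω (k + (p+1) + j.val) := by
        funext j; simp only [Fin.coe_natAdd]; congr 1; omega
      rw [e1, e2]
    have hB : ∀ y : Fin (p+m) → ℝ,
        (𝔼.E fun ω' => Φ (y, ω' k)) =
          (g' (fun i : Fin p => y (Fin.castAdd m i)) - c) *
            ψ (fun j : Fin m => y (Fin.natAdd p j)) := by
      intro y
      have h1 : (fun ω' : RSeq => Φ (y, ω' k)) =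
          fun ω' => ψ (fun j : Fin m => y (Fin.natAdd p j)) *
            (g (Fin.cons (ω' k) fun i => y (Fin.castAdd m i)) - c) := by
        funext ω'; simp only [hΦdef]; ring
      rw [h1, E_const_mul_sub 𝔼 (cb_cons hg k _) (hψ0 _)]
      exact mul_comm _ _
    have hInd := hiid.2 k (p + m) Φ hΦ
    rw [hA] at hInd
    have hRHS : (fun ω : RSeq => 𝔼.E fun ω' => Φ (fun j : Fin (p+m) => ω (k + 1 + j.val), ω' k))
        = fun ω => (g' (fun i : Fin p => ω (k + 1 + i.val)) - c) *
            ψ (fun j : Fin m => ω (k + 1 + p + j.val)) := by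
      funext ω
      rw [hB]
      have e3 : (fun i : Fin p => ω (k + 1 + (Fin.castAdd m i).val))
          = fun i : Fin p => ω (k + 1 + i.val) := by
        funext i; rfl
      have e4 : (fun j : Fin m => ω (k + 1 + (Fin.natAdd p j).val))
          = fun j : Fin m => ω (k + 1 + p + j.val) := by
        funext j; simp only [Fin.coe_natAdd]; congr 1; omega
      rw [e3, e4]
    rw [hRHS] at hInd
    have hIH := IH (k+1) m g' ψ c hg' hψ hψ0
    have hE : 𝔼.E (fun ω' => g' fun i : Fin p => ω' (k + 1 + i.val)) =
        𝔼.E (fun ω' => g fun i : Fin (p+1) => ω' (k + i.val)) := by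
      have hΦ2 : BddLip (fun q : (Fin p → ℝ) × ℝ => g (Fin.cons q.2 q.1)) := hg.compL lip_T3
      have h := hiid.2 k p (fun q : (Fin p → ℝ) × ℝ => g (Fin.cons q.2 q.1)) hΦ2
      simp only [hg'def]
      rw [← h]
      congr 1; funext ω
      exact congrArg g (hconsω ω)
    rw [hInd, hIH, hE]
    congr 1; funext ω
    have e5 : (fun j : Fin m => ω (k + 1 + p + j.val))
        = fun j : Fin m => ω (k + (p+1) + j.val) := by
      funext j; congr 1; omega
    rw [e5]

lemma integrable_of_cb {X : RSeq → ℝ} (hX : Cb X) (P : ProbabilityMeasure RSeq) :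
    Integrable X (P : Measure RSeq) := by
  obtain ⟨hc, C, hC⟩ := hX
  exact Integrable.mono' (integrable_const C) hc.measurable.aestronglyMeasurable
    (Filter.Eventually.of_forall fun ω => by simpa [Real.norm_eq_abs] using hC ω)


/-- Lemma `Char-P-left`: for a regular sublinear expectation `⃖𝔼`
under which the coordinate process is `<`i.i.d., the maximal representing set `⃖Θ`
coincides with the set of `P ∈ ⃖Θ` such that
`E_P[φ_n(ξ_1,…,ξ_n) ψ_m(ξ_{n+1},…,ξ_{n+m})] ≤ ⃖𝔼[φ_n(ξ)]·E_P[ψ_m(θ_n ξ)]` for all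
bounded Lipschitz `φ_n` and all nonnegative bounded Lipschitz `ψ_m`. -/
theorem stmt13 (𝔼 : SubLinExp) (hreg : Regular 𝔼) (hiid : CoordLtIID 𝔼) :
    maxRep 𝔼 = {P ∈ maxRep 𝔼 |
      ∀ (n m : ℕ) (φ : (Fin n → ℝ) → ℝ) (ψ : (Fin m → ℝ) → ℝ),
        BddLip φ → BddLip ψ → (∀ x, 0 ≤ ψ x) →
        ∫ ω, φ (fun i : Fin n => ω i.val) * ψ (fun j : Fin m => ω (n + j.val))
            ∂(P : Measure RSeq) ≤
          𝔼.E (fun ω => φ (fun i : Fin n => ω i.val)) *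
            ∫ ω, ψ (fun j : Fin m => ω (n + j.val)) ∂(P : Measure RSeq)} := by
  refine Set.Subset.antisymm ?_ (Set.sep_subset _ _)
  intro P hP
  refine ⟨hP, ?_⟩
  intro n m φ ψ hφ hψ hψ0
  set c : ℝ := 𝔼.E (fun ω => φ (fun i : Fin n => ω i.val)) with hc
  have hkey := key_s13 𝔼 hiid n 0 m φ ψ c hφ hψ hψ0
  simp only [Nat.zero_add] at hkey
  have hzero : 𝔼.E (fun ω => (φ (fun i : Fin n => ω i.val) - c) *
      ψ (fun j : Fin m => ω (n + j.val))) = 0 := by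
    rw [hkey, ← hc]
    simp only [sub_self, zero_mul]
    exact 𝔼.const 0
  have hCbφ : Cb fun ω : RSeq => φ (fun i : Fin n => ω i.val) := cb_sel hφ _
  have hCbψ : Cb fun ω : RSeq => ψ (fun j : Fin m => ω (n + j.val)) := cb_sel hψ _
  have hCbprod : Cb fun ω : RSeq => (φ (fun i : Fin n => ω i.val) - c) *
      ψ (fun j : Fin m => ω (n + j.val)) := (hCbφ.sub_const c).mul hCbψ
  have hPle := hP _ hCbprod
  rw [hzero] at hPle
  have hint1 : Integrable (fun ω : RSeq => φ (fun i : Fin n => ω i.val) *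
      ψ (fun j : Fin m => ω (n + j.val))) (P : Measure RSeq) :=
    integrable_of_cb (hCbφ.mul hCbψ) P
  have hint2 : Integrable (fun ω : RSeq => ψ (fun j : Fin m => ω (n + j.val)))
      (P : Measure RSeq) := integrable_of_cb hCbψ P
  have hsplit : ∫ ω, (φ (fun i : Fin n => ω i.val) - c) *
        ψ (fun j : Fin m => ω (n + j.val)) ∂(P : Measure RSeq)
      = ∫ ω, φ (fun i : Fin n => ω i.val) * ψ (fun j : Fin m => ω (n + j.val))
          ∂(P : Measure RSeq)
        - c * ∫ ω, ψ (fun j : Fin m => ω (n + j.val)) ∂(P : Measure RSeq) := by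
    have hfe : (fun ω : RSeq => (φ (fun i : Fin n => ω i.val) - c) *
        ψ (fun j : Fin m => ω (n + j.val)))
        = fun ω => φ (fun i : Fin n => ω i.val) * ψ (fun j : Fin m => ω (n + j.val))
          - c * ψ (fun j : Fin m => ω (n + j.val)) := by
      funext ω; ring
    rw [hfe, integral_sub hint1 (hint2.const_mul c), integral_const_mul]
  rw [hsplit] at hPle
  linarith
end
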